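/- arXiv:1704.02168 — 7 statements merged into one kernel-verified Lean document; each statement's English description precedes it below -/
import Mathlib

section
/- Let n ≥ 1 and a ≤ b be natural numbers, and let f be twice differentiable on [a/n, b/n] with |f''(x)| ≤ M for all x ∈ [a/n, b/n]. Then |∫_{a/n}^{b/n} f(x) dx − (1/n)·Σ_{j=a}^{b−1} f(j/n) − (1/(2n))·(f(b/n) − f(a/n))| ≤ M·(b − a)/(4n³). -/
open Filter Topology Real BigOperators Set

/-- Trapezoid rule error on a single interval. -/
lemma trap_error (c d : ℝ) (hcd : c ≤ d) (M : ℝ) (hM : 0 ≤ M) (f f' f'' : ℝ → ℝ)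
    (h1 : ∀ x ∈ Set.Icc c d, HasDerivWithinAt f (f' x) (Set.Icc c d) x)
    (h2 : ∀ x ∈ Set.Icc c d, HasDerivWithinAt f' (f'' x) (Set.Icc c d) x)
    (hb : ∀ x ∈ Set.Icc c d, |f'' x| ≤ M) :
    |(∫ x in c..d, f x) - (d - c) / 2 * (f c + f d)| ≤ M * (d - c) ^ 3 / 4 := by
  set φ : ℝ → ℝ := fun x => (f x - f c) / 2 - (x - c) / 2 * f' x with hφdef
  -- derivative of φ within Icc c d
  have hφderiv : ∀ x ∈ Set.Icc c d,
      HasDerivWithinAt φ (-((x - c) / 2 * f'' x)) (Set.Icc c d) x := by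
    intro x hx
    have h := (((h1 x hx).sub_const (f c)).div_const 2).sub
      (((((hasDerivWithinAt_id x (Set.Icc c d)).sub_const c)).div_const 2).mul (h2 x hx))
    refine h.congr_deriv ?_
    simp only [id_eq]
    ring
  have hφcont : ContinuousOn φ (Set.Icc c d) :=
    fun x hx => (hφderiv x hx).continuousWithinAt
  have hfc : ContinuousOn f (Set.Icc c d) := fun x hx => (h1 x hx).continuousWithinAt
  -- Step B : |φ x| ≤ M * (x-c)^2 / 4 on Icc c d
  have hB : ∀ x : ℝ, HasDerivAt (fun y => M * (y - c) ^ 2 / 4) (M * (x - c) / 2) x := by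
    intro x
    have h := ((((hasDerivAt_id x).sub_const c).pow 2).const_mul M).div_const 4
    refine h.congr_deriv ?_
    simp only [id_eq]
    ring
  have hφbound : ∀ x ∈ Set.Icc c d, |φ x| ≤ M * (x - c) ^ 2 / 4 := by
    have key := image_norm_le_of_norm_deriv_right_le_deriv_boundary
      (f := φ) (f' := fun x => -((x - c) / 2 * f'' x)) (a := c) (b := d)
      hφcont
      (fun x hx => (hφderiv x ⟨hx.1, hx.2.le⟩).mono_of_mem_nhdsWithin
        (Icc_mem_nhdsGE_of_mem ⟨hx.1, hx.2⟩))
      (B := fun y => M * (y - c) ^ 2 / 4) (B' := fun x => M * (x - c) / 2)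
      (by simp [hφdef]) hB
      (by
        intro x hx
        have hx' : 0 ≤ x - c := sub_nonneg.2 hx.1
        have := hb x ⟨hx.1, hx.2.le⟩
        rw [Real.norm_eq_abs, abs_neg, abs_mul, abs_of_nonneg (by linarith : (0:ℝ) ≤ (x - c) / 2)]
        calc (x - c) / 2 * |f'' x| ≤ (x - c) / 2 * M := by
              apply mul_le_mul_of_nonneg_left this (by linarith)
          _ = M * (x - c) / 2 := by ring)
    intro x hx
    simpa using key hx
  -- Step C : g and its derivative
  set g : ℝ → ℝ := fun x => (∫ t in c..x, f t) - (x - c) / 2 * (f c + f x) with hgdef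
  have hint : IntervalIntegrable f MeasureTheory.volume c d :=
    (hfc.mono (by rw [Set.uIcc_of_le hcd])).intervalIntegrable
  have hgcont : ContinuousOn g (Set.Icc c d) := by
    have h1' : ContinuousOn (fun x => ∫ t in c..x, f t) (Set.Icc c d) := by
      have := intervalIntegral.continuousOn_primitive_interval
        (f := f) (a := c) (b := d) (μ := MeasureTheory.volume)
        (by rw [Set.uIcc_of_le hcd]; exact hfc.integrableOn_Icc)
      rwa [Set.uIcc_of_le hcd] at this
    exact h1'.sub ((((continuousOn_id.sub continuousOn_const).div_const 2).mul
      (continuousOn_const.add hfc)))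
  have hgderiv : ∀ x ∈ Set.Ico c d, HasDerivWithinAt g (φ x) (Set.Ici x) x := by
    intro x hx
    have hmem : Set.Icc c d ∈ 𝓝[Set.Ici x] x := Icc_mem_nhdsGE_of_mem ⟨hx.1, hx.2⟩
    have hmem' : Set.Icc c d ∈ 𝓝[Set.Ioi x] x := Icc_mem_nhdsGT_of_mem ⟨hx.1, hx.2⟩
    have hxIcc : x ∈ Set.Icc c d := ⟨hx.1, hx.2.le⟩
    have hintcx : IntervalIntegrable f MeasureTheory.volume c x :=
      hint.mono_set (by rw [Set.uIcc_of_le hx.1, Set.uIcc_of_le hcd]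
                        exact Set.Icc_subset_Icc le_rfl hx.2.le)
    have hprim : HasDerivWithinAt (fun u => ∫ t in c..u, f t) (f x) (Set.Ici x) x :=
      intervalIntegral.integral_hasDerivWithinAt_right hintcx
        ⟨Set.Icc c d, hmem', (hfc.aestronglyMeasurable measurableSet_Icc)⟩
        ((hfc x hxIcc).mono_of_mem_nhdsWithin hmem')
    have hfx : HasDerivWithinAt f (f' x) (Set.Ici x) x :=
      (h1 x hxIcc).mono_of_mem_nhdsWithin hmem
    have h2nd : HasDerivWithinAt (fun u => (u - c) / 2 * (f c + f u))
        (1 / 2 * (f c + f x) + (x - c) / 2 * f' x) (Set.Ici x) x := by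
      have h := ((((hasDerivWithinAt_id x (Set.Ici x)).sub_const c)).div_const 2).mul
        ((hasDerivWithinAt_const x (Set.Ici x) (f c)).add hfx)
      refine h.congr_deriv ?_
      simp only [id_eq, Pi.add_apply]
      ring
    have h := hprim.sub h2nd
    refine h.congr_deriv ?_
    simp only [hφdef]
    ring
  -- Step D : apply the fencing lemma to g
  have hkey := image_norm_le_of_norm_deriv_right_le_deriv_boundary
    (f := g) (f' := φ) (a := c) (b := d) hgcont hgderiv
    (B := fun y => M * (y - c) ^ 3 / 12) (B' := fun x => M * (x - c) ^ 2 / 4)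
    (by simp [hgdef, intervalIntegral.integral_same])
    (by
      intro x
      have h := ((((hasDerivAt_id x).sub_const c).pow 3).const_mul M).div_const 12
      refine h.congr_deriv ?_
      simp only [id_eq]
      ring)
    (fun x hx => by simpa using hφbound x ⟨hx.1, hx.2.le⟩)
  have hgd : |g d| ≤ M * (d - c) ^ 3 / 12 := by
    simpa using hkey (Set.right_mem_Icc.2 hcd)
  have hnn : 0 ≤ M * (d - c) ^ 3 := by
    exact mul_nonneg hM (pow_nonneg (sub_nonneg.2 hcd) 3)
  calc |(∫ x in c..d, f x) - (d - c) / 2 * (f c + f d)| = |g d| := rfl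
    _ ≤ M * (d - c) ^ 3 / 12 := hgd
    _ ≤ M * (d - c) ^ 3 / 4 := by linarith

/-- If `f` is twice differentiable on `[a/n, b/n]` with `|f''| ≤ M` there, then
`|∫_{a/n}^{b/n} f − (1/n)·∑_{j=a}^{b−1} f(j/n) − (1/(2n))·(f(b/n) − f(a/n))| ≤ M·(b−a)/(4n³)`. -/
theorem riemann_sum_error_second_order (n a b : ℕ) (hn : 1 ≤ n) (hab : a ≤ b)
    (M : ℝ) (hM : 0 ≤ M) (f f' f'' : ℝ → ℝ)
    (hderiv : ∀ x ∈ Set.Icc ((a : ℝ) / n) ((b : ℝ) / n),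
      HasDerivWithinAt f (f' x) (Set.Icc ((a : ℝ) / n) ((b : ℝ) / n)) x)
    (hderiv2 : ∀ x ∈ Set.Icc ((a : ℝ) / n) ((b : ℝ) / n),
      HasDerivWithinAt f' (f'' x) (Set.Icc ((a : ℝ) / n) ((b : ℝ) / n)) x)
    (hbound : ∀ x ∈ Set.Icc ((a : ℝ) / n) ((b : ℝ) / n), |f'' x| ≤ M) :
    |(∫ x in ((a : ℝ) / n)..((b : ℝ) / n), f x)
        - (1 / (n : ℝ)) * ∑ j ∈ Finset.Ico a b, f ((j : ℝ) / n)
        - (1 / (2 * (n : ℝ))) * (f ((b : ℝ) / n) - f ((a : ℝ) / n))|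
      ≤ M * ((b : ℝ) - (a : ℝ)) / (4 * (n : ℝ) ^ 3) := by
  have hn0 : (0:ℝ) < n := by exact_mod_cast hn
  set N := b - a with hN
  set u : ℕ → ℝ := fun k => ((a : ℝ) + k) / n with hu
  have hu0 : u 0 = (a : ℝ) / n := by simp [hu]
  have huN : u N = (b : ℝ) / n := by
    simp only [hu, hN]
    congr 1
    push_cast [Nat.cast_sub hab]
    ring
  have humono : Monotone u := by
    intro i j hij
    have hij' : (i:ℝ) ≤ j := by exact_mod_cast hij
    simp only [hu]
    gcongr
  have husub : ∀ k, k < N → Set.Icc (u k) (u (k+1)) ⊆ Set.Icc ((a : ℝ) / n) ((b : ℝ) / n) := by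
    intro k hk
    rw [← hu0, ← huN]
    exact Set.Icc_subset_Icc (humono (Nat.zero_le k)) (humono hk)
  have hstep : ∀ k, u (k+1) - u k = 1 / n := by
    intro k
    simp only [hu]
    push_cast
    field_simp
    ring
  have hle : ∀ k, u k ≤ u (k+1) := fun k => humono (Nat.le_succ k)
  -- per interval estimate
  have hEk : ∀ k < N,
      |(∫ x in u k..u (k+1), f x) - (u (k+1) - u k) / 2 * (f (u k) + f (u (k+1)))|
        ≤ M / (4 * (n:ℝ)^3) := by
    intro k hk
    have hsub := husub k hk
    have := trap_error (u k) (u (k+1)) (hle k) M hM f f' f''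
      (fun x hx => (hderiv x (hsub hx)).mono hsub)
      (fun x hx => (hderiv2 x (hsub hx)).mono hsub)
      (fun x hx => hbound x (hsub hx))
    refine this.trans (le_of_eq ?_)
    rw [hstep k, div_pow, one_pow, mul_one_div, div_div, mul_comm ((n:ℝ)^3) 4]
  -- integrability on each subinterval
  have hfc : ContinuousOn f (Set.Icc ((a : ℝ) / n) ((b : ℝ) / n)) :=
    fun x hx => (hderiv x hx).continuousWithinAt
  have hintk : ∀ k < N, IntervalIntegrable f MeasureTheory.volume (u k) (u (k+1)) := by
    intro k hk
    exact ((hfc.mono (husub k hk)).mono (by rw [Set.uIcc_of_le (hle k)])).intervalIntegrable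
  have hsplit : (∑ k ∈ Finset.range N, ∫ x in u k..u (k+1), f x)
      = ∫ x in ((a : ℝ) / n)..((b : ℝ) / n), f x := by
    rw [← hu0, ← huN]
    exact intervalIntegral.sum_integral_adjacent_intervals hintk
  -- sum rearrangement
  have hS : ∑ j ∈ Finset.Ico a b, f ((j : ℝ) / n) = ∑ k ∈ Finset.range N, f (u k) := by
    rw [Finset.sum_Ico_eq_sum_range]
    apply Finset.sum_congr rfl
    intro k _
    congr 1
    simp only [hu]
    push_cast
    ring
  have htel : ∑ k ∈ Finset.range N, (f (u (k+1)) - f (u k)) = f (u N) - f (u 0) :=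
    Finset.sum_range_sub (fun k => f (u k)) N
  have hsum : (1 / (n : ℝ)) * ∑ j ∈ Finset.Ico a b, f ((j : ℝ) / n)
      + (1 / (2 * (n : ℝ))) * (f ((b : ℝ) / n) - f ((a : ℝ) / n))
      = ∑ k ∈ Finset.range N, (u (k+1) - u k) / 2 * (f (u k) + f (u (k+1))) := by
    have : ∀ k ∈ Finset.range N, (u (k+1) - u k) / 2 * (f (u k) + f (u (k+1)))
        = (1 / (n : ℝ)) * f (u k) + (1 / (2 * (n : ℝ))) * (f (u (k+1)) - f (u k)) := by
      intro k _
      rw [hstep k]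
      have hnne : (n:ℝ) ≠ 0 := ne_of_gt hn0
      field_simp
      ring
    rw [Finset.sum_congr rfl this, Finset.sum_add_distrib, ← Finset.mul_sum, ← Finset.mul_sum,
      htel, hS, hu0, huN]
  -- conclude
  have hmain : (∫ x in ((a : ℝ) / n)..((b : ℝ) / n), f x)
        - (1 / (n : ℝ)) * ∑ j ∈ Finset.Ico a b, f ((j : ℝ) / n)
        - (1 / (2 * (n : ℝ))) * (f ((b : ℝ) / n) - f ((a : ℝ) / n))
      = ∑ k ∈ Finset.range N,
          ((∫ x in u k..u (k+1), f x) - (u (k+1) - u k) / 2 * (f (u k) + f (u (k+1)))) := by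
    rw [Finset.sum_sub_distrib, hsplit, ← hsum]
    ring
  rw [hmain]
  calc |∑ k ∈ Finset.range N,
      ((∫ x in u k..u (k+1), f x) - (u (k+1) - u k) / 2 * (f (u k) + f (u (k+1))))|
      ≤ ∑ k ∈ Finset.range N, |(∫ x in u k..u (k+1), f x)
          - (u (k+1) - u k) / 2 * (f (u k) + f (u (k+1)))| := Finset.abs_sum_le_sum_abs _ _
    _ ≤ ∑ _k ∈ Finset.range N, M / (4 * (n:ℝ)^3) := by
        apply Finset.sum_le_sum
        intro k hk
        exact hEk k (Finset.mem_range.mp hk)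
    _ = N * (M / (4 * (n:ℝ)^3)) := by rw [Finset.sum_const, Finset.card_range, nsmul_eq_mul]
    _ = M * ((b : ℝ) - (a : ℝ)) / (4 * (n : ℝ) ^ 3) := by
        rw [hN, Nat.cast_sub hab]
        ring
end

section
/- As z → 0 from the right, the ratio of the two-sided theta sum to √(π/z) tends to 1; that is, lim_{z→0⁺} (Σ_{i∈ℤ} e^{−z·i²}) / √(π/z) = 1. -/
open Filter Topology Real

lemma theta_real_eq_jacobi {t : ℝ} (ht : 0 < t) :
    ((∑' n : ℤ, Real.exp (-t * (n : ℝ) ^ 2) : ℝ) : ℂ) = jacobiTheta (t / π * Complex.I) := by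
  rw [jacobiTheta, Complex.ofReal_tsum]
  refine tsum_congr fun n => ?_
  rw [Complex.ofReal_exp]
  congr 1
  have hπ : (π : ℂ) ≠ 0 := Complex.ofReal_ne_zero.mpr pi_ne_zero
  push_cast
  field_simp
  linear_combination (-(↑t * (n:ℂ) ^ 2)) * Complex.I_mul_I

lemma theta_real_tendsto_one :
    Tendsto (fun t : ℝ => ∑' n : ℤ, Real.exp (-t * (n : ℝ) ^ 2)) atTop (nhds 1) := by
  have h : Tendsto (fun t : ℝ => (∑' n : ℤ, Real.exp (-t * (n : ℝ) ^ 2)) - 1) atTop (nhds 0) := by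
    apply squeeze_zero_norm' (a := fun t => 2 / (1 - Real.exp (-t)) * Real.exp (-t))
    · filter_upwards [eventually_gt_atTop 0] with t ht
      have him : 0 < (↑t / ↑π * Complex.I).im := by
        simp [Complex.div_im, pi_ne_zero, div_pos ht pi_pos]
      have hb := norm_jacobiTheta_sub_one_le him
      have heq : (↑t / ↑π * Complex.I).im = t / π := by
        simp [Complex.div_im]
      rw [heq] at hb
      have hπt : -π * (t / π) = -t := by field_simp
      rw [hπt] at hb
      calc ‖(∑' n : ℤ, Real.exp (-t * (n : ℝ) ^ 2)) - 1‖
          = ‖jacobiTheta (t / π * Complex.I) - 1‖ := by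
            rw [← theta_real_eq_jacobi ht]
            rw [show ((((∑' n : ℤ, Real.exp (-t * (n : ℝ) ^ 2)) : ℝ) : ℂ) - 1)
              = (((∑' n : ℤ, Real.exp (-t * (n : ℝ) ^ 2)) - 1 : ℝ) : ℂ) by push_cast; ring]
            rw [Complex.norm_real]
        _ ≤ 2 / (1 - Real.exp (-t)) * Real.exp (-t) := hb
    · have h1 : Tendsto (fun t : ℝ => Real.exp (-t)) atTop (nhds 0) :=
        Real.tendsto_exp_neg_atTop_nhds_zero
      have h2 : Tendsto (fun t : ℝ => 2 / (1 - Real.exp (-t)) * Real.exp (-t)) atTop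
          (nhds (2 / (1 - 0) * 0)) := by
        exact (tendsto_const_nhds.div (tendsto_const_nhds.sub h1) (by norm_num)).mul h1
      simpa using h2
  have := h.add_const 1
  simpa using this

/-- As `z → 0⁺`, `(∑_{i ∈ ℤ} e^{−z·i²}) / √(π/z) → 1`. -/
theorem theta_sum_asymptotic :
    Tendsto (fun z : ℝ => (∑' i : ℤ, Real.exp (-z * (i : ℝ) ^ 2)) / Real.sqrt (π / z))
      (nhdsWithin 0 (Set.Ioi 0)) (nhds 1) := by
  have key : ∀ z : ℝ, 0 < z →
      (∑' i : ℤ, Real.exp (-z * (i : ℝ) ^ 2)) / Real.sqrt (π / z)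
        = ∑' n : ℤ, Real.exp (-(π ^ 2 / z) * (n : ℝ) ^ 2) := by
    intro z hz
    have ha : 0 < z / π := div_pos hz pi_pos
    have h := Real.tsum_exp_neg_mul_int_sq ha
    have h1 : -π * (z / π) = -z := by field_simp
    have h2 : -π / (z / π) = -(π ^ 2 / z) := by rw [div_div_eq_mul_div, neg_mul, neg_div, ← sq]
    rw [h1, h2] at h
    have h3 : (z / π) ^ (1 / 2 : ℝ) = Real.sqrt (z / π) := (Real.sqrt_eq_rpow _).symm
    rw [h3] at h
    have h4 : (Real.sqrt (z / π))⁻¹ = Real.sqrt (π / z) := by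
      rw [← Real.sqrt_inv, inv_div]
    have hs : 0 < Real.sqrt (π / z) := Real.sqrt_pos.mpr (div_pos pi_pos hz)
    rw [one_div, h4] at h
    rw [h, mul_comm, mul_div_assoc, div_self hs.ne', mul_one]
  have hcomp : Tendsto (fun z : ℝ => π ^ 2 / z) (nhdsWithin 0 (Set.Ioi 0)) atTop := by
    simp_rw [div_eq_mul_inv]
    exact Tendsto.const_mul_atTop (by positivity) tendsto_inv_nhdsGT_zero
  refine Tendsto.congr' ?_ (theta_real_tendsto_one.comp hcomp)
  filter_upwards [self_mem_nhdsWithin] with z hz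
  exact (key z hz).symm
end

section
/- Under the standing assumptions, for every ι with 0 < ι < η and every fixed positive integer m, lim_{n→∞} h_n(0, ⌊ιn⌋, m) = (μ(0)/λ(0))^m. In particular the limit is independent of ι and equals the extinction probability of the linear birth–death process with per-capita birth rate λ(0) and death rate μ(0). -/
open Filter Topology Real BigOperators

/-- The hitting probability `h_n(0, ⌊ιn⌋, m)` that the stochastic logistic chain
(birth rate `λ(i/n)·i`, death rate `μ(i/n)·i`) started at `m` hits `0` before `⌊ιn⌋`.
The empty product (`i = 0`) is `1` and empty sums are `0`. -/
noncomputable def hitProb (lam mu : ℝ → ℝ) (n a b m : ℕ) : ℝ :=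
  (∑ i ∈ Finset.Ico m b, ∏ j ∈ Finset.Icc 1 i, mu ((j : ℝ) / n) / lam ((j : ℝ) / n)) /
  (∑ i ∈ Finset.Ico a b, ∏ j ∈ Finset.Icc 1 i, mu ((j : ℝ) / n) / lam ((j : ℝ) / n))

/-- The potential `V(x) = ∫_0^x log(μ(t)/λ(t)) dt`. -/
noncomputable def Vpot (lam mu : ℝ → ℝ) (x : ℝ) : ℝ :=
  ∫ t in (0 : ℝ)..x, Real.log (mu t / lam t)

lemma sum_Ico_tendsto_geom (p : ℕ → ℕ → ℝ) (b : ℕ → ℕ) (r : ℝ) (m : ℕ)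
    (hr0 : 0 ≤ r) (hr1 : r < 1)
    (hb : Tendsto b atTop atTop)
    (hnn : ∀ n i, 0 ≤ p n i)
    (h1 : ∀ i, Tendsto (fun n => p n i) atTop (𝓝 (r ^ i)))
    (h2 : ∀ ε > (0:ℝ), ∃ K, ∀ᶠ n in atTop, (∑ i ∈ Finset.Ico K (b n), p n i) ≤ ε) :
    Tendsto (fun n => ∑ i ∈ Finset.Ico m (b n), p n i) atTop (𝓝 (r ^ m / (1 - r))) := by
  have h1r : (0:ℝ) < 1 - r := by linarith
  rw [Metric.tendsto_atTop]
  intro ε hε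
  obtain ⟨K₁, hK₁⟩ := h2 (ε/4) (by linarith)
  -- choose K₂ with r^K₂/(1-r) < ε/4
  have htend : Tendsto (fun k : ℕ => r ^ k / (1 - r)) atTop (𝓝 0) := by
    simpa using (tendsto_pow_atTop_nhds_zero_of_lt_one hr0 hr1).div_const (1 - r)
  obtain ⟨K₂, hK₂⟩ := (htend.eventually (gt_mem_nhds (show (0:ℝ) < ε/4 by linarith))).exists_forall_of_atTop
  set K := max (max K₁ K₂) m with hK
  have hKm : m ≤ K := le_max_right _ _
  have hKK₁ : K₁ ≤ K := le_trans (le_max_left _ _) (le_max_left _ _)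
  have hKK₂ : K₂ ≤ K := le_trans (le_max_right _ _) (le_max_left _ _)
  -- finite sum convergence
  have hfin : Tendsto (fun n => ∑ i ∈ Finset.Ico m K, p n i) atTop
      (𝓝 (∑ i ∈ Finset.Ico m K, r ^ i)) := by
    exact tendsto_finset_sum _ (fun i _ => h1 i)
  have hfin' := (hfin.eventually (Metric.ball_mem_nhds _ (show (0:ℝ) < ε/4 by linarith)))
  have hbK := hb.eventually_ge_atTop K
  obtain ⟨N, hN⟩ := ((hK₁.and hfin').and hbK).exists_forall_of_atTop
  refine ⟨N, fun n hn => ?_⟩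
  obtain ⟨⟨htail, hhead⟩, hbn⟩ := hN n hn
  have hsplit : ∑ i ∈ Finset.Ico m (b n), p n i
      = (∑ i ∈ Finset.Ico m K, p n i) + ∑ i ∈ Finset.Ico K (b n), p n i :=
    (Finset.sum_Ico_consecutive _ hKm hbn).symm
  -- geometric head identity
  have hgeom : ∑ i ∈ Finset.Ico m K, r ^ i = r ^ m / (1 - r) - r ^ K / (1 - r) := by
    have := geom_sum_Ico (ne_of_lt hr1) hKm
    rw [this, ← neg_sub (r ^ m) (r ^ K), ← neg_sub (1:ℝ) r, neg_div_neg_eq, sub_div]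
  have htail0 : 0 ≤ ∑ i ∈ Finset.Ico K (b n), p n i :=
    Finset.sum_nonneg fun i _ => hnn n i
  have htail' : ∑ i ∈ Finset.Ico K (b n), p n i ≤ ε/4 := by
    refine le_trans ?_ htail
    exact Finset.sum_le_sum_of_subset_of_nonneg
      (Finset.Ico_subset_Ico hKK₁ le_rfl) (fun i _ _ => hnn n i)
  have hG0 : 0 ≤ r ^ K / (1 - r) := div_nonneg (pow_nonneg hr0 K) h1r.le
  have hG : r ^ K / (1 - r) < ε/4 := by
    have : r ^ K ≤ r ^ K₂ := pow_le_pow_of_le_one hr0 hr1.le hKK₂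
    calc r ^ K / (1 - r) ≤ r ^ K₂ / (1 - r) := by gcongr
    _ < ε/4 := hK₂ K₂ le_rfl
  have hhead' : |(∑ i ∈ Finset.Ico m K, p n i) - ∑ i ∈ Finset.Ico m K, r ^ i| < ε/4 := by
    simpa [Real.dist_eq] using hhead
  rw [Real.dist_eq, hsplit]
  have : (∑ i ∈ Finset.Ico m K, p n i) + (∑ i ∈ Finset.Ico K (b n), p n i) - r ^ m / (1 - r)
      = ((∑ i ∈ Finset.Ico m K, p n i) - ∑ i ∈ Finset.Ico m K, r ^ i)
        + ((∑ i ∈ Finset.Ico K (b n), p n i) - r ^ K / (1 - r)) := by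
    rw [hgeom]; ring
  rw [this]
  calc |_| ≤ |(∑ i ∈ Finset.Ico m K, p n i) - ∑ i ∈ Finset.Ico m K, r ^ i|
      + |(∑ i ∈ Finset.Ico K (b n), p n i) - r ^ K / (1 - r)| := abs_add_le _ _
  _ < ε/4 + ε/4 := by
      apply add_lt_add_of_lt_of_le hhead'
      rw [abs_sub_le_iff]
      constructor <;> linarith
  _ < ε := by linarith


set_option maxHeartbeats 1600000 in
/-- Invasion probability (Proposition 1): under the standing assumptions, for `0 < ι < η`
(encoded by `0 < λ(ι)`, i.e. `ι < ω`, together with `V(ι) < 0`, i.e. `ι < ζ`) and any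
fixed positive integer `m`, `h_n(0, ⌊ιn⌋, m) → (μ(0)/λ(0))^m` as `n → ∞`. -/
theorem invasion_probability (lam mu : ℝ → ℝ)
    (hlamc : ContinuousOn lam (Set.Ici 0)) (hmuc : ContinuousOn mu (Set.Ici 0))
    (hlamnn : ∀ x ∈ Set.Ici (0 : ℝ), 0 ≤ lam x) (hmunn : ∀ x ∈ Set.Ici (0 : ℝ), 0 ≤ mu x)
    (hanti : StrictAntiOn lam (Set.Ici 0)) (hmono : StrictMonoOn mu (Set.Ici 0))
    (hmu0 : 0 < mu 0) (hlm0 : mu 0 < lam 0)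
    (κ : ℝ) (hκ : 0 < κ) (hκeq : lam κ = mu κ)
    (ι : ℝ) (hι : 0 < ι) (hιω : 0 < lam ι) (hιζ : Vpot lam mu ι < 0)
    (m : ℕ) (hm : 1 ≤ m) :
    Tendsto (fun n : ℕ => hitProb lam mu n 0 (⌊ι * (n : ℝ)⌋₊) m)
      atTop (nhds ((mu 0 / lam 0) ^ m)) := by
  have hlam0 : 0 < lam 0 := lt_trans hmu0 hlm0
  set r0 : ℝ := mu 0 / lam 0 with hr0def
  have hr0pos : 0 < r0 := div_pos hmu0 hlam0
  have hr01 : r0 < 1 := (div_lt_one hlam0).2 hlm0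
  set f : ℝ → ℝ := fun t => Real.log (mu t / lam t) with hfdef
  set p : ℕ → ℕ → ℝ :=
    fun n i => ∏ j ∈ Finset.Icc 1 i, mu ((j : ℝ) / n) / lam ((j : ℝ) / n) with hpdef
  set b : ℕ → ℕ := fun n => ⌊ι * (n : ℝ)⌋₊ with hbdef
  -- positivity of lam and mu on [0, ι]
  have hlampos : ∀ x, 0 ≤ x → x ≤ ι → 0 < lam x := by
    intro x hx hxι
    have h1 : lam ι ≤ lam x :=
      hanti.antitoneOn (Set.mem_Ici.2 hx) (Set.mem_Ici.2 hι.le) hxι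
    linarith
  have hmupos : ∀ x, 0 ≤ x → x ≤ ι → 0 < mu x := by
    intro x hx _
    have h1 : mu 0 ≤ mu x :=
      hmono.monotoneOn (Set.mem_Ici.2 le_rfl) (Set.mem_Ici.2 hx) hx
    linarith
  have hratpos : ∀ x, 0 ≤ x → x ≤ ι → 0 < mu x / lam x :=
    fun x hx hxι => div_pos (hmupos x hx hxι) (hlampos x hx hxι)
  have hratio_mono : ∀ x y, 0 ≤ x → x ≤ y → y ≤ ι → mu x / lam x ≤ mu y / lam y := by
    intro x y hx hxy hyι
    have hy : (0:ℝ) ≤ y := le_trans hx hxy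
    refine div_le_div₀ (hmunn y (Set.mem_Ici.2 hy)) ?_ (hlampos y hy hyι) ?_
    · exact hmono.monotoneOn (Set.mem_Ici.2 hx) (Set.mem_Ici.2 hy) hxy
    · exact hanti.antitoneOn (Set.mem_Ici.2 hx) (Set.mem_Ici.2 hy) hxy
  have hfmono : ∀ x y, 0 ≤ x → x ≤ y → y ≤ ι → f x ≤ f y := by
    intro x y hx hxy hyι
    exact Real.log_le_log (hratpos x hx (le_trans hxy hyι)) (hratio_mono x y hx hxy hyι)
  have hIccsub : Set.Icc (0:ℝ) ι ⊆ Set.Ici 0 := Set.Icc_subset_Ici_self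
  have hfcont : ContinuousOn f (Set.Icc 0 ι) := by
    apply ContinuousOn.log
    · exact (hmuc.mono hIccsub).div (hlamc.mono hIccsub)
        (fun x hx => (hlampos x hx.1 hx.2).ne')
    · exact fun x hx => (hratpos x hx.1 hx.2).ne'
  have h0mem : (0:ℝ) ∈ Set.Icc (0:ℝ) ι := ⟨le_rfl, hι.le⟩
  have hιmem : ι ∈ Set.Icc (0:ℝ) ι := ⟨hι.le, le_rfl⟩
  have hint : ∀ a c : ℝ, a ∈ Set.Icc (0:ℝ) ι → c ∈ Set.Icc (0:ℝ) ι →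
      IntervalIntegrable f MeasureTheory.volume a c :=
    fun a c ha hc => (hfcont.mono (Set.uIcc_subset_Icc ha hc)).intervalIntegrable
  have hVdiff : ∀ a c : ℝ, a ∈ Set.Icc (0:ℝ) ι → c ∈ Set.Icc (0:ℝ) ι →
      Vpot lam mu c - Vpot lam mu a = ∫ t in a..c, f t := by
    intro a c ha hc
    have h2 := intervalIntegral.integral_add_adjacent_intervals
      (hint 0 a h0mem ha) (hint a c ha hc)
    simp only [Vpot, ← hfdef]
    linarith
  -- δ and ρ
  set δ : ℝ := min κ ι / 2 with hδdef
  have hminpos : 0 < min κ ι := lt_min hκ hι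
  have hδpos : 0 < δ := by positivity
  have hδκ : δ < κ := by
    have := min_le_left κ ι; rw [hδdef]; linarith
  have hδι : δ < ι := by
    have := min_le_right κ ι; rw [hδdef]; linarith
  have hδmem : δ ∈ Set.Icc (0:ℝ) ι := ⟨hδpos.le, hδι.le⟩
  set ρ : ℝ := mu δ / lam δ with hρdef
  have hρpos : 0 < ρ := hratpos δ hδpos.le hδι.le
  have hρ1 : ρ < 1 := by
    rw [hρdef, div_lt_one (hlampos δ hδpos.le hδι.le)]
    have h1 : mu δ < mu κ := hmono (Set.mem_Ici.2 hδpos.le) (Set.mem_Ici.2 hκ.le) hδκ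
    have h2 : lam κ < lam δ := hanti (Set.mem_Ici.2 hδpos.le) (Set.mem_Ici.2 hκ.le) hδκ
    linarith [hκeq]
  have hrat_le_ρ : ∀ x, 0 ≤ x → x ≤ δ → mu x / lam x ≤ ρ :=
    fun x hx h => hratio_mono x δ hx h hδι.le
  have hflogρ : ∀ t, 0 ≤ t → t ≤ δ → f t ≤ Real.log ρ := by
    intro t ht htδ
    exact Real.log_le_log (hratpos t ht (le_trans htδ hδι.le)) (hrat_le_ρ t ht htδ)
  have hVδ : Vpot lam mu δ < 0 := by
    have hle : (∫ t in (0:ℝ)..δ, f t) ≤ ∫ t in (0:ℝ)..δ, Real.log ρ := by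
      apply intervalIntegral.integral_mono_on hδpos.le (hint 0 δ h0mem hδmem)
        intervalIntegrable_const
      intro x hx; exact hflogρ x hx.1 hx.2
    have hc : (∫ t in (0:ℝ)..δ, Real.log ρ) = δ * Real.log ρ := by
      simp [intervalIntegral.integral_const, smul_eq_mul]
    have hlρ : Real.log ρ < 0 := Real.log_neg hρpos hρ1
    have : Vpot lam mu δ ≤ δ * Real.log ρ := by
      simp only [Vpot, ← hfdef]; rw [← hc]; exact hle
    nlinarith
  -- sign of f relative to κ
  have hfnonpos : ∀ t, 0 ≤ t → t ≤ κ → f t ≤ 0 := by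
    intro t ht htκ
    have hmuκ : mu t ≤ mu κ := hmono.monotoneOn (Set.mem_Ici.2 ht) (Set.mem_Ici.2 hκ.le) htκ
    have hlamκ : lam κ ≤ lam t := hanti.antitoneOn (Set.mem_Ici.2 ht) (Set.mem_Ici.2 hκ.le) htκ
    have hlamt : 0 < lam t := by rw [hκeq] at hlamκ; nlinarith [hmono.monotoneOn (Set.mem_Ici.2 le_rfl) (Set.mem_Ici.2 hκ.le) hκ.le]
    apply Real.log_nonpos
    · exact div_nonneg (hmunn t (Set.mem_Ici.2 ht)) (hlamnn t (Set.mem_Ici.2 ht))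
    · rw [div_le_one hlamt]; linarith [hκeq]
  have hfnonneg : ∀ t, κ ≤ t → t ≤ ι → 0 ≤ f t := by
    intro t ht htι
    have hκt : (0:ℝ) ≤ t := le_trans hκ.le ht
    have hmuκ : mu κ ≤ mu t := hmono.monotoneOn (Set.mem_Ici.2 hκ.le) (Set.mem_Ici.2 hκt) ht
    have hlamκ : lam t ≤ lam κ := hanti.antitoneOn (Set.mem_Ici.2 hκ.le) (Set.mem_Ici.2 hκt) ht
    apply Real.log_nonneg
    rw [le_div_iff₀ (hlampos t hκt htι)]; linarith [hκeq]
  -- β and the potential bound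
  set β : ℝ := min (-(Vpot lam mu δ)) (-(Vpot lam mu ι)) with hβdef
  have hβpos : 0 < β := lt_min (by linarith) (by linarith)
  have hVb : ∀ x, δ ≤ x → x ≤ ι → Vpot lam mu x ≤ -β := by
    intro x hx1 hx2
    have hxmem : x ∈ Set.Icc (0:ℝ) ι := ⟨le_trans hδpos.le hx1, hx2⟩
    rcases le_total x κ with hc | hc
    · have hdiff := hVdiff δ x hδmem hxmem
      have hneg : (∫ t in δ..x, f t) ≤ 0 := by
        have h0 : (∫ t in δ..x, (0:ℝ)) = 0 := by simp
        rw [← h0]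
        apply intervalIntegral.integral_mono_on hx1 (hint δ x hδmem hxmem)
          intervalIntegrable_const
        intro u hu; exact hfnonpos u (le_trans hδpos.le hu.1) (le_trans hu.2 hc)
      have hb1 : β ≤ -(Vpot lam mu δ) := min_le_left _ _
      linarith
    · have hdiff := hVdiff x ι hxmem hιmem
      have hpos : (0:ℝ) ≤ ∫ t in x..ι, f t := by
        apply intervalIntegral.integral_nonneg hx2
        intro u hu; exact hfnonneg u (le_trans hc hu.1) hu.2
      have hb2 : β ≤ -(Vpot lam mu ι) := min_le_right _ _
      linarith
  -- bound M on |f|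
  obtain ⟨M, hM⟩ := (isCompact_Icc : IsCompact (Set.Icc (0:ℝ) ι)).exists_bound_of_continuousOn hfcont
  have hM0 : 0 ≤ M := le_trans (norm_nonneg (f 0)) (hM 0 h0mem)
  -- Riemann sum comparison
  have hRiem : ∀ n : ℕ, 1 ≤ n → ∀ i : ℕ, ((i:ℝ)+1) ≤ ι * n →
      (∑ j ∈ Finset.Icc 1 i, f ((j:ℝ)/n)) ≤
        (n:ℝ) * (Vpot lam mu (((i:ℝ)+1)/n) - Vpot lam mu (1/n)) := by
    intro n hn i hi
    have hn0 : (0:ℝ) < n := by exact_mod_cast hn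
    have hmemk : ∀ j : ℝ, 0 ≤ j → j ≤ (i:ℝ)+1 → j/n ∈ Set.Icc (0:ℝ) ι := by
      intro j hj hji
      constructor
      · positivity
      · rw [div_le_iff₀ hn0]; nlinarith
    set aseq : ℕ → ℝ := fun k => ((k:ℝ)+1)/n with haseq
    have haseqmem : ∀ k : ℕ, (k:ℝ) + 1 ≤ (i:ℝ) + 1 → aseq k ∈ Set.Icc (0:ℝ) ι := by
      intro k hk
      exact hmemk ((k:ℝ)+1) (by positivity) hk
    have hintk : ∀ k, k < i → IntervalIntegrable f MeasureTheory.volume (aseq k) (aseq (k+1)) := by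
      intro k hk
      have hki : (k:ℝ) + 1 ≤ (i:ℝ) + 1 := by
        have : (k:ℝ) ≤ (i:ℝ) := by exact_mod_cast hk.le
        linarith
      have hki' : ((k+1:ℕ):ℝ) + 1 ≤ (i:ℝ) + 1 := by
        push_cast
        have : (k:ℝ) + 1 ≤ (i:ℝ) := by exact_mod_cast hk
        linarith
      exact hint _ _ (haseqmem k hki) (haseqmem (k+1) hki')
    have htele := intervalIntegral.sum_integral_adjacent_intervals hintk
    -- each term bound
    have hstep : ∀ k ∈ Finset.range i, f (aseq k) ≤ (n:ℝ) * ∫ t in (aseq k)..(aseq (k+1)), f t := by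
      intro k hk
      rw [Finset.mem_range] at hk
      have hki : (k:ℝ) + 1 ≤ (i:ℝ) + 1 := by
        have : (k:ℝ) ≤ (i:ℝ) := by exact_mod_cast hk.le
        linarith
      have hki' : ((k+1:ℕ):ℝ) + 1 ≤ (i:ℝ) + 1 := by
        push_cast
        have : (k:ℝ) + 1 ≤ (i:ℝ) := by exact_mod_cast hk
        linarith
      have hmk := haseqmem k hki
      have hmk' := haseqmem (k+1) hki'
      have hle : aseq k ≤ aseq (k+1) := by
        show ((k:ℝ)+1)/n ≤ (((k+1:ℕ):ℝ)+1)/n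
        rw [div_le_div_iff_of_pos_right hn0]
        push_cast; linarith
      have hconst : (∫ t in (aseq k)..(aseq (k+1)), f (aseq k)) ≤
          ∫ t in (aseq k)..(aseq (k+1)), f t := by
        apply intervalIntegral.integral_mono_on hle intervalIntegrable_const
          (hint _ _ hmk hmk')
        intro x hx
        exact hfmono (aseq k) x hmk.1 hx.1 (le_trans hx.2 hmk'.2)
      have hcval : (∫ t in (aseq k)..(aseq (k+1)), f (aseq k))
          = (aseq (k+1) - aseq k) * f (aseq k) := by
        rw [intervalIntegral.integral_const, smul_eq_mul]
      have hdiffa : aseq (k+1) - aseq k = 1/n := by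
        show (((k+1:ℕ):ℝ)+1)/n - ((k:ℝ)+1)/n = 1/n
        push_cast; ring
      rw [hcval, hdiffa] at hconst
      have h2' := mul_le_mul_of_nonneg_left hconst hn0.le
      rw [← mul_assoc, mul_one_div_cancel hn0.ne', one_mul] at h2'
      exact h2'
    have hsum : (∑ k ∈ Finset.range i, f (aseq k)) ≤
        (n:ℝ) * ∑ k ∈ Finset.range i, ∫ t in (aseq k)..(aseq (k+1)), f t := by
      rw [Finset.mul_sum]
      exact Finset.sum_le_sum hstep
    have hre : (∑ j ∈ Finset.Icc 1 i, f ((j:ℝ)/n)) = ∑ k ∈ Finset.range i, f (aseq k) := by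
      rw [← Finset.Ico_add_one_right_eq_Icc, Finset.sum_Ico_eq_sum_range]
      simp only [Nat.add_sub_cancel]
      apply Finset.sum_congr rfl
      intro k _
      have harg : ((1 + k : ℕ) : ℝ)/n = aseq k := by
        show _ = ((k:ℝ)+1)/n
        push_cast; ring
      rw [harg]
    have ha0 : aseq 0 = 1/(n:ℝ) := by
      show (((0:ℕ):ℝ)+1)/n = 1/(n:ℝ)
      norm_num
    have hai : aseq i = ((i:ℝ)+1)/n := rfl
    have hVd := hVdiff (1/n) (((i:ℝ)+1)/n)
      (hmemk 1 (by norm_num) (by linarith [Nat.cast_nonneg (α := ℝ) i]))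
      (hmemk ((i:ℝ)+1) (by positivity) le_rfl)
    rw [hre]
    calc (∑ k ∈ Finset.range i, f (aseq k))
        ≤ (n:ℝ) * ∑ k ∈ Finset.range i, ∫ t in (aseq k)..(aseq (k+1)), f t := hsum
      _ = (n:ℝ) * ∫ t in (1/(n:ℝ))..(((i:ℝ)+1)/n), f t := by rw [htele, ha0, hai]
      _ = (n:ℝ) * (Vpot lam mu (((i:ℝ)+1)/n) - Vpot lam mu (1/n)) := by rw [hVd]
  -- per-term bound
  have hbound : ∀ n : ℕ, 1 ≤ n → 1 ≤ δ * n → ∀ i : ℕ, i < b n →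
      p n i ≤ ρ ^ i + Real.exp (M - β * n) := by
    intro n hn1 hnδ i hib
    have hn0 : (0:ℝ) < n := by exact_mod_cast hn1
    have hiι : ((i:ℝ)+1) ≤ ι * n := by
      have h1 : i + 1 ≤ b n := hib
      have h2 : ((b n : ℕ):ℝ) ≤ ι * n := Nat.floor_le (by positivity)
      calc ((i:ℝ)+1) = ((i+1:ℕ):ℝ) := by push_cast; ring
        _ ≤ ((b n : ℕ):ℝ) := by exact_mod_cast h1
        _ ≤ ι * n := h2
    have hexpnn : (0:ℝ) ≤ Real.exp (M - β * n) := (Real.exp_pos _).le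
    have hjmem : ∀ j : ℕ, j ∈ Finset.Icc 1 i → ((j:ℝ)/n) ∈ Set.Icc (0:ℝ) ι := by
      intro j hj
      rw [Finset.mem_Icc] at hj
      constructor
      · positivity
      · rw [div_le_iff₀ hn0]
        have : (j:ℝ) ≤ (i:ℝ) := by exact_mod_cast hj.2
        nlinarith
    rcases le_or_gt (i:ℝ) (δ * n) with hc | hc
    · have hpow : p n i ≤ ρ ^ i := by
        have hbnd : ∀ j ∈ Finset.Icc 1 i, mu ((j:ℝ)/n) / lam ((j:ℝ)/n) ≤ ρ := by
          intro j hj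
          rw [Finset.mem_Icc] at hj
          apply hrat_le_ρ _ (by positivity)
          rw [div_le_iff₀ hn0]
          have : (j:ℝ) ≤ (i:ℝ) := by exact_mod_cast hj.2
          nlinarith
        calc p n i ≤ ∏ _j ∈ Finset.Icc 1 i, ρ := by
              apply Finset.prod_le_prod
              · intro j hj
                have hjm := hjmem j hj
                exact (hratpos _ hjm.1 hjm.2).le
              · exact hbnd
          _ = ρ ^ i := by rw [Finset.prod_const, Nat.card_Icc, Nat.add_sub_cancel]
      linarith
    · have hpexp : p n i = Real.exp (∑ j ∈ Finset.Icc 1 i, f ((j:ℝ)/n)) := by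
        rw [Real.exp_sum]
        apply Finset.prod_congr rfl
        intro j hj
        have hjm := hjmem j hj
        exact (Real.exp_log (hratpos _ hjm.1 hjm.2)).symm
      have hsumle := hRiem n hn1 i hiι
      have hVup : Vpot lam mu (((i:ℝ)+1)/n) ≤ -β := by
        apply hVb
        · rw [le_div_iff₀ hn0]; nlinarith
        · rw [div_le_iff₀ hn0]; nlinarith
      have h1n : 1/(n:ℝ) ≤ δ := by rw [div_le_iff₀ hn0]; nlinarith
      have hVlow : -(M/n) ≤ Vpot lam mu (1/(n:ℝ)) := by
        have hnorm : ‖∫ t in (0:ℝ)..(1/(n:ℝ)), f t‖ ≤ M * |1/(n:ℝ) - 0| := by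
          apply intervalIntegral.norm_integral_le_of_norm_le_const
          intro x hx
          rw [Set.uIoc_of_le (by positivity : (0:ℝ) ≤ 1/(n:ℝ))] at hx
          exact hM x ⟨hx.1.le, le_trans hx.2 (le_trans h1n hδι.le)⟩
        have habs : |1/(n:ℝ) - 0| = 1/(n:ℝ) := by
          rw [sub_zero, abs_of_nonneg]; positivity
        rw [habs] at hnorm
        have hVabs : |Vpot lam mu (1/(n:ℝ))| ≤ M * (1/(n:ℝ)) := by
          simpa [Vpot, ← hfdef, Real.norm_eq_abs] using hnorm
        have hMn : M * (1/(n:ℝ)) = M/n := by ring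
        rw [hMn] at hVabs
        linarith [(abs_le.1 hVabs).1]
      have hfinal : (∑ j ∈ Finset.Icc 1 i, f ((j:ℝ)/n)) ≤ M - β * n := by
        have hd : Vpot lam mu (((i:ℝ)+1)/n) - Vpot lam mu (1/(n:ℝ)) ≤ -β + M/n := by
          linarith
        have hmul : (n:ℝ) * (Vpot lam mu (((i:ℝ)+1)/n) - Vpot lam mu (1/(n:ℝ)))
            ≤ (n:ℝ) * (-β + M/n) := by
          exact mul_le_mul_of_nonneg_left hd hn0.le
        have heq : (n:ℝ) * (-β + M/n) = M - β * n := by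
          field_simp; ring
        linarith
      have hple : p n i ≤ Real.exp (M - β * n) := by
        rw [hpexp]; exact Real.exp_le_exp.2 hfinal
      have hρnn : (0:ℝ) ≤ ρ ^ i := (pow_pos hρpos i).le
      linarith
  -- ingredients for the abstract lemma
  have hbtop : Tendsto b atTop atTop := by
    apply tendsto_nat_floor_atTop.comp
    exact Tendsto.const_mul_atTop hι tendsto_natCast_atTop_atTop
  have hnn : ∀ n i, 0 ≤ p n i := by
    intro n i
    apply Finset.prod_nonneg
    intro j _
    exact div_nonneg (hmunn _ (Set.mem_Ici.2 (by positivity)))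
      (hlamnn _ (Set.mem_Ici.2 (by positivity)))
  have hone : ∀ j : ℕ, Tendsto (fun n : ℕ => mu ((j:ℝ)/n) / lam ((j:ℝ)/n)) atTop (𝓝 r0) := by
    intro j
    have hj : Tendsto (fun n : ℕ => (j:ℝ)/n) atTop (𝓝[Set.Ici 0] 0) := by
      rw [tendsto_nhdsWithin_iff]
      exact ⟨tendsto_const_div_atTop_nhds_zero_nat (j:ℝ),
        Filter.Eventually.of_forall fun n => Set.mem_Ici.2 (by positivity)⟩
    have hmu' : Tendsto (fun n : ℕ => mu ((j:ℝ)/n)) atTop (𝓝 (mu 0)) :=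
      (hmuc 0 (Set.mem_Ici.2 le_rfl)).tendsto.comp hj
    have hlam' : Tendsto (fun n : ℕ => lam ((j:ℝ)/n)) atTop (𝓝 (lam 0)) :=
      (hlamc 0 (Set.mem_Ici.2 le_rfl)).tendsto.comp hj
    exact hmu'.div hlam' hlam0.ne'
  have h1 : ∀ i, Tendsto (fun n => p n i) atTop (𝓝 (r0 ^ i)) := by
    intro i
    have ht := tendsto_finset_prod (Finset.Icc 1 i) (fun j _ => hone j)
    have hval : (∏ _j ∈ Finset.Icc 1 i, r0) = r0 ^ i := by
      rw [Finset.prod_const, Nat.card_Icc, Nat.add_sub_cancel]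
    rw [hval] at ht
    exact ht
  have hgeo : ∀ K t : ℕ, (∑ i ∈ Finset.Ico K t, ρ ^ i) ≤ ρ ^ K / (1 - ρ) := by
    intro K t
    have h1ρ : (0:ℝ) < 1 - ρ := by linarith
    rcases le_or_gt K t with h | h
    · rw [geom_sum_Ico' (ne_of_lt hρ1) h]
      exact (div_le_div_iff_of_pos_right h1ρ).2 (sub_le_self _ (pow_nonneg hρpos.le t))
    · rw [Finset.Ico_eq_empty (by omega)]
      rw [Finset.sum_empty]
      exact div_nonneg (pow_nonneg hρpos.le K) h1ρ.le
  have hexp0 : Tendsto (fun n : ℕ => ι * n * Real.exp (M - β * n)) atTop (𝓝 0) := by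
    have hx1 : Tendsto (fun x : ℝ => x * Real.exp (-x)) atTop (𝓝 0) := by
      simpa using tendsto_pow_mul_exp_neg_atTop_nhds_zero 1
    have hx2 : Tendsto (fun x : ℝ => β * x * Real.exp (-(β * x))) atTop (𝓝 0) :=
      hx1.comp (Tendsto.const_mul_atTop hβpos tendsto_id)
    have hx3 : Tendsto (fun n : ℕ => β * (n:ℝ) * Real.exp (-(β * n))) atTop (𝓝 0) :=
      hx2.comp tendsto_natCast_atTop_atTop
    have hx4 := hx3.const_mul (ι * Real.exp M / β)
    rw [mul_zero] at hx4
    apply hx4.congr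
    intro n
    have hsplit : Real.exp (M - β * n) = Real.exp M * Real.exp (-(β * n)) := by
      rw [← Real.exp_add]; ring_nf
    rw [hsplit]
    field_simp
  have h2 : ∀ ε > (0:ℝ), ∃ K, ∀ᶠ n in atTop, (∑ i ∈ Finset.Ico K (b n), p n i) ≤ ε := by
    intro ε hε
    have htendK : Tendsto (fun k : ℕ => ρ ^ k / (1 - ρ)) atTop (𝓝 0) := by
      simpa using (tendsto_pow_atTop_nhds_zero_of_lt_one hρpos.le hρ1).div_const (1 - ρ)
    obtain ⟨K, hK⟩ := (htendK.eventually (gt_mem_nhds (show (0:ℝ) < ε/2 by linarith))).exists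
    refine ⟨K, ?_⟩
    have hev1 : ∀ᶠ n : ℕ in atTop, 1 ≤ n := eventually_ge_atTop 1
    have hev2 : ∀ᶠ n : ℕ in atTop, 1 ≤ δ * n :=
      (Tendsto.const_mul_atTop hδpos tendsto_natCast_atTop_atTop).eventually_ge_atTop 1
    have hev3 : ∀ᶠ n : ℕ in atTop, ι * n * Real.exp (M - β * n) < ε/2 :=
      hexp0.eventually (gt_mem_nhds (show (0:ℝ) < ε/2 by linarith))
    filter_upwards [hev1, hev2, hev3] with n hn1 hnδ hne
    have hb' : ∀ i ∈ Finset.Ico K (b n), p n i ≤ ρ ^ i + Real.exp (M - β * n) := by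
      intro i hi
      rw [Finset.mem_Ico] at hi
      exact hbound n hn1 hnδ i hi.2
    calc (∑ i ∈ Finset.Ico K (b n), p n i)
        ≤ ∑ i ∈ Finset.Ico K (b n), (ρ ^ i + Real.exp (M - β * n)) := Finset.sum_le_sum hb'
      _ = (∑ i ∈ Finset.Ico K (b n), ρ ^ i)
            + ((Finset.Ico K (b n)).card : ℝ) * Real.exp (M - β * n) := by
          rw [Finset.sum_add_distrib, Finset.sum_const, nsmul_eq_mul]
      _ ≤ ρ ^ K / (1 - ρ) + ι * n * Real.exp (M - β * n) := by
          apply add_le_add (hgeo K (b n))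
          apply mul_le_mul_of_nonneg_right ?_ (Real.exp_pos _).le
          calc ((Finset.Ico K (b n)).card : ℝ) ≤ ((b n : ℕ) : ℝ) := by
                rw [Nat.card_Ico]; exact_mod_cast Nat.sub_le _ _
            _ ≤ ι * n := Nat.floor_le (by positivity)
      _ ≤ ε/2 + ε/2 := add_le_add hK.le hne.le
      _ = ε := by ring
  -- conclusion
  have hnum := sum_Ico_tendsto_geom p b r0 m hr0pos.le hr01 hbtop hnn h1 h2
  have hden := sum_Ico_tendsto_geom p b r0 0 hr0pos.le hr01 hbtop hnn h1 h2
  have h1r0 : (0:ℝ) < 1 - r0 := by linarith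
  have hdenne : r0 ^ 0 / (1 - r0) ≠ 0 := by
    rw [pow_zero]
    positivity
  have hdiv := hnum.div hden hdenne
  have hvaldiv : r0 ^ m / (1 - r0) / (r0 ^ 0 / (1 - r0)) = r0 ^ m := by
    rw [pow_zero]
    field_simp
  rw [hvaldiv] at hdiv
  exact hdiv.congr (fun n => rfl)
end

section
/- Under the standing assumptions, fix ι with 0 < ι < η and let (m_n) be any sequence of natural numbers with m_n → ∞ and m_n ≤ ⌊ιn⌋ for all n. Then lim_{n→∞} h_n(0, ⌊ιn⌋, m_n) = 0; i.e., started from m_n the chain hits ⌊ιn⌋ before 0 with probability tending to 1. -/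
open Filter Topology Real BigOperators

/-- Proposition 2: under the standing assumptions, for `0 < ι < η` (encoded by
`0 < λ(ι)` and `V(ι) < 0`) and any sequence `m_n → ∞` with `m_n ≤ ⌊ιn⌋`,
`h_n(0, ⌊ιn⌋, m_n) → 0`; i.e. once the population reaches `m_n` it hits `⌊ιn⌋`
before extinction with probability tending to one. -/
theorem establishment_reaches_high_levels (lam mu : ℝ → ℝ)
    (hlamc : ContinuousOn lam (Set.Ici 0)) (hmuc : ContinuousOn mu (Set.Ici 0))
    (hlamnn : ∀ x ∈ Set.Ici (0 : ℝ), 0 ≤ lam x) (hmunn : ∀ x ∈ Set.Ici (0 : ℝ), 0 ≤ mu x)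
    (hanti : StrictAntiOn lam (Set.Ici 0)) (hmono : StrictMonoOn mu (Set.Ici 0))
    (hmu0 : 0 < mu 0) (hlm0 : mu 0 < lam 0)
    (κ : ℝ) (hκ : 0 < κ) (hκeq : lam κ = mu κ)
    (ι : ℝ) (hι : 0 < ι) (hιω : 0 < lam ι) (hιζ : Vpot lam mu ι < 0)
    (mn : ℕ → ℕ) (hmn : Tendsto mn atTop atTop)
    (hmnle : ∀ n, mn n ≤ ⌊ι * (n : ℝ)⌋₊) :
    Tendsto (fun n : ℕ => hitProb lam mu n 0 (⌊ι * (n : ℝ)⌋₊) (mn n))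
      atTop (nhds 0) := by
  classical
  set f : ℝ → ℝ := fun x => Real.log (mu x / lam x) with hfdef
  have hV : ∀ x : ℝ, Vpot lam mu x = ∫ t in (0:ℝ)..x, f t := fun x => rfl
  set M : ℝ := max ι κ with hMdef
  have hιM : ι ≤ M := le_max_left _ _
  have hM0 : 0 < M := lt_of_lt_of_le hι hιM
  -- positivity of mu on [0,∞)
  have hmupos : ∀ x ∈ Set.Ici (0:ℝ), 0 < mu x := fun x hx =>
    lt_of_lt_of_le hmu0 (hmono.monotoneOn (Set.mem_Ici.2 le_rfl) hx hx)
  -- positivity of lam on [0, M]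
  have hlamM : 0 < lam M := by
    rcases max_cases ι κ with ⟨h1, _⟩ | ⟨h1, _⟩
    · rw [hMdef, h1]; exact hιω
    · rw [hMdef, h1, hκeq]; exact hmupos κ (Set.mem_Ici.2 hκ.le)
  have hlampos : ∀ x ∈ Set.Icc (0:ℝ) M, 0 < lam x := fun x hx =>
    lt_of_lt_of_le hlamM
      (hanti.antitoneOn (Set.mem_Ici.2 hx.1) (Set.mem_Ici.2 hM0.le) hx.2)
  have hrpos : ∀ x ∈ Set.Icc (0:ℝ) M, 0 < mu x / lam x := fun x hx =>
    div_pos (hmupos x (Set.mem_Ici.2 hx.1)) (hlampos x hx)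
  -- ratio monotone on [0, M]
  have hrmono : ∀ x ∈ Set.Icc (0:ℝ) M, ∀ y ∈ Set.Icc (0:ℝ) M, x ≤ y →
      mu x / lam x ≤ mu y / lam y := by
    intro x hx y hy hxy
    exact div_le_div₀ (hmunn y (Set.mem_Ici.2 hy.1))
      (hmono.monotoneOn (Set.mem_Ici.2 hx.1) (Set.mem_Ici.2 hy.1) hxy)
      (hlampos y hy)
      (hanti.antitoneOn (Set.mem_Ici.2 hx.1) (Set.mem_Ici.2 hy.1) hxy)
  have hfmono : ∀ x ∈ Set.Icc (0:ℝ) M, ∀ y ∈ Set.Icc (0:ℝ) M, x ≤ y → f x ≤ f y :=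
    fun x hx y hy hxy => Real.log_le_log (hrpos x hx) (hrmono x hx y hy hxy)
  -- continuity / integrability of f on [0, M]
  have hsub : Set.Icc (0:ℝ) M ⊆ Set.Ici 0 := Set.Icc_subset_Ici_self
  have hfc : ContinuousOn f (Set.Icc (0:ℝ) M) := by
    apply ContinuousOn.log
    · exact (hmuc.mono hsub).div (hlamc.mono hsub) (fun x hx => (hlampos x hx).ne')
    · exact fun x hx => (hrpos x hx).ne'
  have hInt : ∀ a b : ℝ, a ∈ Set.Icc (0:ℝ) M → b ∈ Set.Icc (0:ℝ) M →
      IntervalIntegrable f MeasureTheory.volume a b := fun a b ha hb =>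
    (hfc.mono (Set.uIcc_subset_Icc ha hb)).intervalIntegrable
  -- the cut point c and geometric ratio ρ
  set c : ℝ := min ι κ / 2 with hcdef
  have hc0 : 0 < c := by rw [hcdef]; have := lt_min hι hκ; linarith
  have hcι : c < ι := by
    have h1 : min ι κ ≤ ι := min_le_left _ _
    have h2 : 0 < min ι κ := lt_min hι hκ
    rw [hcdef]; linarith
  have hcκ : c < κ := by
    have h1 : min ι κ ≤ κ := min_le_right _ _
    have h2 : 0 < min ι κ := lt_min hι hκ
    rw [hcdef]; linarith
  have hcM : c ∈ Set.Icc (0:ℝ) M := ⟨hc0.le, le_trans hcι.le hιM⟩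
  have hιMem : ι ∈ Set.Icc (0:ℝ) M := ⟨hι.le, hιM⟩
  have h0M : (0:ℝ) ∈ Set.Icc (0:ℝ) M := ⟨le_rfl, hM0.le⟩
  set ρ : ℝ := mu c / lam c with hρdef
  have hρ0 : 0 < ρ := hrpos c hcM
  have hρ1 : ρ < 1 := by
    have h1 : mu c < mu κ := hmono (Set.mem_Ici.2 hc0.le) (Set.mem_Ici.2 hκ.le) hcκ
    have h2 : lam κ ≤ lam c :=
      hanti.antitoneOn (Set.mem_Ici.2 hc0.le) (Set.mem_Ici.2 hκ.le) hcκ.le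
    have h3 : mu c < lam c := by rw [hκeq] at h2; linarith
    rw [hρdef, div_lt_one (hlampos c hcM)]; exact h3
  have hfc0 : f c < 0 := Real.log_neg hρ0 hρ1
  -- V(c) < 0
  have hVc : Vpot lam mu c < 0 := by
    rw [hV]
    have hle : ∫ t in (0:ℝ)..c, f t ≤ ∫ t in (0:ℝ)..c, f c := by
      apply intervalIntegral.integral_mono_on hc0.le (hInt 0 c h0M hcM)
        intervalIntegrable_const
      intro t ht
      exact hfmono t ⟨ht.1, le_trans ht.2 hcM.2⟩ c hcM ht.2
    have heq : ∫ t in (0:ℝ)..c, f c = c * f c := by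
      simp [intervalIntegral.integral_const, smul_eq_mul]
    rw [heq] at hle
    exact lt_of_le_of_lt hle (mul_neg_of_pos_of_neg hc0 hfc0)
  set ε : ℝ := -(max (Vpot lam mu c) (Vpot lam mu ι)) with hεdef
  have hε : 0 < ε := by rw [hεdef]; exact neg_pos.2 (max_lt hVc hιζ)
  -- V ≤ -ε on [c, ι]
  have hVbound : ∀ x ∈ Set.Icc c ι, Vpot lam mu x ≤ -ε := by
    intro x hx
    have hxM : x ∈ Set.Icc (0:ℝ) M := ⟨hc0.le.trans hx.1, hx.2.trans hιM⟩
    have hgoal : Vpot lam mu x ≤ max (Vpot lam mu c) (Vpot lam mu ι) := by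
      by_cases hcase : mu x / lam x ≤ 1
      · have hfx : f x ≤ 0 :=
          Real.log_nonpos (div_nonneg (hmunn x (Set.mem_Ici.2 hxM.1))
            (hlamnn x (Set.mem_Ici.2 hxM.1))) hcase
        have hsub2 : Vpot lam mu x - Vpot lam mu c = ∫ t in c..x, f t := by
          rw [hV, hV]
          exact intervalIntegral.integral_interval_sub_left (hInt 0 x h0M hxM)
            (hInt 0 c h0M hcM)
        have hneg : ∫ t in c..x, f t ≤ 0 := by
          have h := intervalIntegral.integral_mono_on (μ := MeasureTheory.volume) hx.1
            (hInt c x hcM hxM) (intervalIntegrable_const (c := (0:ℝ)))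
            (fun t ht => le_trans
              (hfmono t ⟨hc0.le.trans ht.1, ht.2.trans hxM.2⟩ x hxM ht.2) hfx)
          simpa using h
        have := le_max_left (Vpot lam mu c) (Vpot lam mu ι)
        linarith
      · have hfx : 0 ≤ f x := Real.log_nonneg (le_of_not_ge hcase)
        have hsub2 : Vpot lam mu ι - Vpot lam mu x = ∫ t in x..ι, f t := by
          rw [hV, hV]
          exact intervalIntegral.integral_interval_sub_left (hInt 0 ι h0M hιMem)
            (hInt 0 x h0M hxM)
        have hnn : 0 ≤ ∫ t in x..ι, f t := by
          have h := intervalIntegral.integral_mono_on (μ := MeasureTheory.volume) hx.2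
            (intervalIntegrable_const (c := (0:ℝ))) (hInt x ι hxM hιMem)
            (fun t ht => le_trans hfx
              (hfmono x hxM t ⟨hxM.1.trans ht.1, ht.2.trans hιM⟩ ht.1))
          simpa using h
        have := le_max_right (Vpot lam mu c) (Vpot lam mu ι)
        linarith
    rw [hεdef, neg_neg]; exact hgoal
  set C : ℝ := Real.exp (-(f 0)) with hCdef
  have hC0 : 0 < C := Real.exp_pos _
  -- choose N₀ so that for n ≥ N₀ : 1 ≤ n and 1 ≤ ι * n
  obtain ⟨N₀, hN₀⟩ : ∃ N₀ : ℕ, (1:ℝ) ≤ ι * N₀ ∧ 1 ≤ N₀ := by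
    obtain ⟨N, hN⟩ := exists_nat_gt (1/ι)
    refine ⟨max N 1, ?_, le_max_right _ _⟩
    have h2 : (N:ℝ) ≤ ((max N 1 : ℕ) : ℝ) := by exact_mod_cast le_max_left N 1
    have h3 : (1:ℝ)/ι ≤ ((max N 1 : ℕ) : ℝ) := le_trans hN.le h2
    calc (1:ℝ) = ι * (1/ι) := by field_simp
    _ ≤ ι * ((max N 1 : ℕ) : ℝ) := mul_le_mul_of_nonneg_left h3 hι.le
  -- the eventual bound
  have key : ∀ᶠ n : ℕ in atTop,
      hitProb lam mu n 0 (⌊ι * (n : ℝ)⌋₊) (mn n) ≤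
        ρ ^ (mn n) / (1 - ρ) + ι * n * (C * Real.exp (-((n:ℝ) * ε))) := by
    filter_upwards [eventually_ge_atTop N₀] with n hn
    have hn1 : 1 ≤ n := le_trans hN₀.2 hn
    have hnR : (0:ℝ) < n := by exact_mod_cast Nat.lt_of_lt_of_le Nat.zero_lt_one hn1
    have hιn1 : (1:ℝ) ≤ ι * n := by
      refine le_trans hN₀.1 ?_
      apply mul_le_mul_of_nonneg_left _ hι.le
      exact_mod_cast hn
    set b : ℕ := ⌊ι * (n : ℝ)⌋₊ with hbdef
    have hb1 : 1 ≤ b := Nat.le_floor (by exact_mod_cast hιn1)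
    have hbR : (b:ℝ) ≤ ι * n := Nat.floor_le (by positivity)
    -- nonnegativity of terms
    have hjnn : ∀ j : ℕ, ((j:ℝ)/n) ∈ Set.Ici (0:ℝ) := fun j => Set.mem_Ici.2 (by positivity)
    have hPnn : ∀ i : ℕ,
        0 ≤ ∏ j ∈ Finset.Icc 1 i, mu ((j : ℝ) / n) / lam ((j : ℝ) / n) := fun i =>
      Finset.prod_nonneg fun j _ => div_nonneg (hmunn _ (hjnn j)) (hlamnn _ (hjnn j))
    -- denominator ≥ 1
    have hD1 : (1:ℝ) ≤
        ∑ i ∈ Finset.Ico 0 b,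
          ∏ j ∈ Finset.Icc 1 i, mu ((j : ℝ) / n) / lam ((j : ℝ) / n) := by
      have h0mem : (0:ℕ) ∈ Finset.Ico 0 b := Finset.mem_Ico.2 ⟨le_rfl, hb1⟩
      have h := Finset.single_le_sum
        (f := fun i : ℕ => ∏ j ∈ Finset.Icc 1 i, mu ((j : ℝ) / n) / lam ((j : ℝ) / n))
        (fun i _ => hPnn i) h0mem
      simpa using h
    have hfrac : hitProb lam mu n 0 b (mn n) ≤
        ∑ i ∈ Finset.Ico (mn n) b,
          ∏ j ∈ Finset.Icc 1 i, mu ((j : ℝ) / n) / lam ((j : ℝ) / n) := by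
      simp only [hitProb]
      exact div_le_self (Finset.sum_nonneg fun i _ => hPnn i) hD1
    refine le_trans hfrac ?_
    -- pointwise bound on the products
    have hpoint : ∀ i ∈ Finset.Ico (mn n) b,
        (∏ j ∈ Finset.Icc 1 i, mu ((j : ℝ) / n) / lam ((j : ℝ) / n)) ≤
          ρ ^ i + C * Real.exp (-((n:ℝ) * ε)) := by
      intro i hi
      have hib : i < b := (Finset.mem_Ico.1 hi).2
      have hi1R : (i:ℝ) + 1 ≤ ι * n := by
        have h : ((i + 1 : ℕ) : ℝ) ≤ (b:ℝ) := by exact_mod_cast hib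
        push_cast at h
        linarith
      have hmemM : ∀ j : ℕ, (j:ℝ) ≤ (i:ℝ) + 1 → ((j:ℝ)/n) ∈ Set.Icc (0:ℝ) M := by
        intro j hj
        refine ⟨by positivity, ?_⟩
        have h : (j:ℝ)/n ≤ ι := by
          rw [div_le_iff₀ hnR]
          exact le_trans hj hi1R
        exact h.trans hιM
      rcases le_or_gt ((i:ℝ)) (c * n) with hic | hic
      · -- geometric regime
        have hprod : (∏ j ∈ Finset.Icc 1 i, mu ((j : ℝ) / n) / lam ((j : ℝ) / n)) ≤ ρ ^ i := by
          have hle : ∀ j ∈ Finset.Icc 1 i,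
              mu ((j : ℝ) / n) / lam ((j : ℝ) / n) ≤ ρ := by
            intro j hj
            have hji : (j:ℝ) ≤ (i:ℝ) := by
              exact_mod_cast (Finset.mem_Icc.1 hj).2
            have hjc : (j:ℝ)/n ≤ c := by
              rw [div_le_iff₀ hnR]
              exact le_trans hji hic
            exact hrmono _ (hmemM j (by linarith)) c hcM hjc
          calc (∏ j ∈ Finset.Icc 1 i, mu ((j : ℝ) / n) / lam ((j : ℝ) / n)) ≤
              ∏ _j ∈ Finset.Icc 1 i, ρ := Finset.prod_le_prod
                (fun j _ => div_nonneg (hmunn _ (hjnn j)) (hlamnn _ (hjnn j))) hle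
          _ = ρ ^ i := by rw [Finset.prod_const, Nat.card_Icc]; norm_num
        exact hprod.trans (le_add_of_nonneg_right
          (mul_nonneg hC0.le (Real.exp_pos _).le))
      · -- integral regime
        set a : ℕ → ℝ := fun k => ((k:ℝ) + 1)/n with hadef
        have ha_eq : ∀ k : ℕ, a k = ((k:ℝ) + 1)/n := fun k => by simp only [hadef]
        have haM : ∀ k : ℕ, k ≤ i → a k ∈ Set.Icc (0:ℝ) M := by
          intro k hk
          have hkR : (k:ℝ) ≤ (i:ℝ) := by exact_mod_cast hk
          have h := hmemM (k+1) (by push_cast; linarith)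
          have hcast : ((k+1 : ℕ) : ℝ) = (k:ℝ) + 1 := by push_cast; ring
          rw [hcast] at h
          rw [ha_eq]
          exact h
        -- sum over Icc 1 i equals sum over range i of f (a k)
        have hsum_eq : ∑ j ∈ Finset.Icc 1 i, f ((j:ℝ)/n) =
            ∑ k ∈ Finset.range i, f (a k) := by
          rw [← Finset.Ico_add_one_right_eq_Icc, Finset.sum_Ico_eq_sum_range]
          simp only [Nat.add_sub_cancel]
          apply Finset.sum_congr rfl
          intro k _
          congr 1
          rw [ha_eq]
          push_cast
          ring
        -- each term bounded by n times an integral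
        have hstep : ∀ k, k < i → f (a k) ≤ (n:ℝ) * ∫ t in a k..a (k+1), f t := by
          intro k hk
          have hkM : a k ∈ Set.Icc (0:ℝ) M := haM k hk.le
          have hk1M : a (k+1) ∈ Set.Icc (0:ℝ) M := haM (k+1) hk
          have hcast1 : a (k+1) = ((k:ℝ) + 1 + 1)/n := by
            rw [ha_eq]; push_cast; ring
          have hlt : a k ≤ a (k+1) := by
            rw [ha_eq, hcast1]
            exact (div_le_div_iff_of_pos_right hnR).2 (by linarith)
          have hgap : a (k+1) - a k = 1/(n:ℝ) := by
            rw [hcast1, ha_eq]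
            rw [div_sub_div_same]
            norm_num
          have hmonot : ∀ t ∈ Set.Icc (a k) (a (k+1)), f (a k) ≤ f t := fun t ht =>
            hfmono (a k) hkM t ⟨hkM.1.trans ht.1, ht.2.trans hk1M.2⟩ ht.1
          have hintle := intervalIntegral.integral_mono_on hlt intervalIntegrable_const
            (hInt (a k) (a (k+1)) hkM hk1M) hmonot
          rw [intervalIntegral.integral_const, hgap, smul_eq_mul] at hintle
          calc f (a k) = (n:ℝ) * (1/(n:ℝ) * f (a k)) := by field_simp
          _ ≤ (n:ℝ) * ∫ t in a k..a (k+1), f t :=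
              mul_le_mul_of_nonneg_left hintle hnR.le
        -- chain the inequalities
        have hsum_int : ∑ k ∈ Finset.range i, (∫ t in a k..a (k+1), f t) =
            ∫ t in (a 0)..(a i), f t :=
          intervalIntegral.sum_integral_adjacent_intervals
            (fun k hk => hInt (a k) (a (k+1)) (haM k hk.le) (haM (k+1) hk))
        have hS : ∑ k ∈ Finset.range i, f (a k) ≤ (n:ℝ) * ∫ t in (a 0)..(a i), f t := by
          calc ∑ k ∈ Finset.range i, f (a k)
              ≤ ∑ k ∈ Finset.range i, (n:ℝ) * ∫ t in a k..a (k+1), f t :=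
                Finset.sum_le_sum (fun k hk => hstep k (Finset.mem_range.1 hk))
          _ = (n:ℝ) * ∑ k ∈ Finset.range i, ∫ t in a k..a (k+1), f t := by
              rw [Finset.mul_sum]
          _ = (n:ℝ) * ∫ t in (a 0)..(a i), f t := by rw [hsum_int]
        have hIeq : ∫ t in (a 0)..(a i), f t = Vpot lam mu (a i) - Vpot lam mu (a 0) := by
          rw [hV, hV]
          exact (intervalIntegral.integral_interval_sub_left
            (hInt 0 (a i) h0M (haM i le_rfl)) (hInt 0 (a 0) h0M (haM 0 (Nat.zero_le _)))).symm
        have hai_c : c ≤ a i := by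
          rw [ha_eq, le_div_iff₀ hnR]
          linarith
        have hai_i : a i ≤ ι := by
          rw [ha_eq, div_le_iff₀ hnR]
          linarith
        have hVai : Vpot lam mu (a i) ≤ -ε := hVbound (a i) ⟨hai_c, hai_i⟩
        have ha0M : a 0 ∈ Set.Icc (0:ℝ) M := haM 0 (Nat.zero_le _)
        have hV0 : f 0 * (1/(n:ℝ)) ≤ Vpot lam mu (a 0) := by
          rw [hV]
          have h := intervalIntegral.integral_mono_on ha0M.1 intervalIntegrable_const
            (hInt 0 (a 0) h0M ha0M)
            (fun t ht => hfmono 0 h0M t ⟨ht.1, ht.2.trans ha0M.2⟩ ht.1)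
          rw [intervalIntegral.integral_const, smul_eq_mul, sub_zero] at h
          have ha0v : a 0 = 1/(n:ℝ) := by rw [ha_eq]; norm_num
          rw [ha0v] at h
          rw [ha0v, mul_comm]
          exact h
        have hkey : ∑ j ∈ Finset.Icc 1 i, f ((j:ℝ)/n) ≤ -((n:ℝ)*ε) + -(f 0) := by
          have h1 : (n:ℝ) * (Vpot lam mu (a i) - Vpot lam mu (a 0)) ≤
              (n:ℝ) * (-ε - f 0 * (1/(n:ℝ))) :=
            mul_le_mul_of_nonneg_left (by linarith) hnR.le
          have h2 : (n:ℝ) * (-ε - f 0 * (1/(n:ℝ))) = -((n:ℝ)*ε) + -(f 0) := by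
            field_simp
            ring
          rw [hsum_eq]
          calc ∑ k ∈ Finset.range i, f (a k) ≤ (n:ℝ) * ∫ t in (a 0)..(a i), f t := hS
          _ = (n:ℝ) * (Vpot lam mu (a i) - Vpot lam mu (a 0)) := by rw [hIeq]
          _ ≤ (n:ℝ) * (-ε - f 0 * (1/(n:ℝ))) := h1
          _ = -((n:ℝ)*ε) + -(f 0) := h2
        have hPexp : (∏ j ∈ Finset.Icc 1 i, mu ((j : ℝ) / n) / lam ((j : ℝ) / n)) =
            Real.exp (∑ j ∈ Finset.Icc 1 i, f ((j:ℝ)/n)) := by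
          rw [Real.exp_sum]
          apply Finset.prod_congr rfl
          intro j hj
          have hji : (j:ℝ) ≤ (i:ℝ) := by exact_mod_cast (Finset.mem_Icc.1 hj).2
          exact (Real.exp_log (hrpos _ (hmemM j (by linarith)))).symm
        have hfin : (∏ j ∈ Finset.Icc 1 i, mu ((j : ℝ) / n) / lam ((j : ℝ) / n)) ≤
            C * Real.exp (-((n:ℝ)*ε)) := by
          rw [hPexp]
          calc Real.exp (∑ j ∈ Finset.Icc 1 i, f ((j:ℝ)/n))
              ≤ Real.exp (-((n:ℝ)*ε) + -(f 0)) := Real.exp_le_exp.2 hkey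
          _ = C * Real.exp (-((n:ℝ)*ε)) := by rw [Real.exp_add, hCdef]; ring
        exact hfin.trans (le_add_of_nonneg_left (pow_nonneg hρ0.le i))
    -- assemble the sum bound
    calc ∑ i ∈ Finset.Ico (mn n) b,
        ∏ j ∈ Finset.Icc 1 i, mu ((j : ℝ) / n) / lam ((j : ℝ) / n)
        ≤ ∑ i ∈ Finset.Ico (mn n) b, (ρ ^ i + C * Real.exp (-((n:ℝ) * ε))) :=
          Finset.sum_le_sum hpoint
    _ = (∑ i ∈ Finset.Ico (mn n) b, ρ ^ i) +
          ((Finset.Ico (mn n) b).card : ℝ) * (C * Real.exp (-((n:ℝ) * ε))) := by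
        rw [Finset.sum_add_distrib, Finset.sum_const, nsmul_eq_mul]
    _ ≤ ρ ^ (mn n) / (1 - ρ) + ι * n * (C * Real.exp (-((n:ℝ) * ε))) := by
        apply add_le_add (geom_sum_Ico_le_of_lt_one hρ0.le hρ1)
        apply mul_le_mul_of_nonneg_right _ (mul_nonneg hC0.le (Real.exp_pos _).le)
        rw [Nat.card_Ico]
        calc ((b - mn n : ℕ) : ℝ) ≤ (b:ℝ) := by exact_mod_cast Nat.sub_le _ _
        _ ≤ ι * n := hbR
  -- limit of the bounding sequence
  have hG : Tendsto (fun n : ℕ =>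
      ρ ^ (mn n) / (1 - ρ) + ι * n * (C * Real.exp (-((n:ℝ) * ε)))) atTop (nhds 0) := by
    have t1 : Tendsto (fun n : ℕ => ρ ^ (mn n) / (1 - ρ)) atTop (nhds 0) := by
      have h := ((tendsto_pow_atTop_nhds_zero_of_lt_one hρ0.le hρ1).comp hmn).div_const (1 - ρ)
      simpa [Function.comp] using h
    have t2 : Tendsto (fun n : ℕ => ι * n * (C * Real.exp (-((n:ℝ) * ε)))) atTop (nhds 0) := by
      have h1 : Tendsto (fun n : ℕ => (n:ℝ) * ε) atTop atTop :=
        tendsto_natCast_atTop_atTop.atTop_mul_const hε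
      have h2 : Tendsto (fun x : ℝ => x * Real.exp (-x)) atTop (nhds 0) := by
        simpa using Real.tendsto_pow_mul_exp_neg_atTop_nhds_zero 1
      have h3 := (h2.comp h1).const_mul (ι * C / ε)
      rw [mul_zero] at h3
      apply h3.congr
      intro n
      simp only [Function.comp_apply]
      field_simp
    simpa using t1.add t2
  have hpos : ∀ n : ℕ, 0 ≤ hitProb lam mu n 0 (⌊ι * (n : ℝ)⌋₊) (mn n) := by
    intro n
    simp only [hitProb]
    apply div_nonneg <;>
      exact Finset.sum_nonneg fun i _ => Finset.prod_nonneg fun j _ =>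
        div_nonneg (hmunn _ (Set.mem_Ici.2 (by positivity)))
          (hlamnn _ (Set.mem_Ici.2 (by positivity)))
  exact squeeze_zero' (Eventually.of_forall hpos) key hG
end

section
/- Under the standing assumptions, let ι satisfy η < ι < ω and let (m_n) be any sequence of natural numbers such that m_n ≤ ⌊νn⌋ for all n, for some ν < ι. Then lim_{n→∞} h_n(0, ⌊ιn⌋, m_n) = 1; i.e., the chain started from m_n hits 0 before ⌊ιn⌋ with probability tending to 1, so the rescaled process X^{(n)}/n is asymptotically stochastically bounded by η + ε for every ε > 0. -/
open Filter Topology Real BigOperators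

private lemma aux_intg {f : ℝ → ℝ} {A : ℝ} (hc : ContinuousOn f (Set.Icc 0 A))
    {a b : ℝ} (h0 : 0 ≤ a) (haA : a ≤ A) (h0b : 0 ≤ b) (hbA : b ≤ A) :
    IntervalIntegrable f MeasureTheory.volume a b :=
  (hc.mono (Set.uIcc_subset_Icc ⟨h0, haA⟩ ⟨h0b, hbA⟩)).intervalIntegrable

private lemma aux_step {f : ℝ → ℝ} {A : ℝ} (hm : MonotoneOn f (Set.Icc 0 A))
    (hc : ContinuousOn f (Set.Icc 0 A)) {a b : ℝ} (h0 : 0 ≤ a) (hab : a ≤ b) (hbA : b ≤ A) :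
    (b - a) * f a ≤ (∫ t in a..b, f t) ∧ (∫ t in a..b, f t) ≤ (b - a) * f b := by
  have haA : a ≤ A := le_trans hab hbA
  have h0b : 0 ≤ b := le_trans h0 hab
  have hint := aux_intg hc h0 haA h0b hbA
  constructor
  · have := intervalIntegral.integral_mono_on (f := fun _ => f a) (g := f) hab
      intervalIntegrable_const hint
      (fun x hx => hm ⟨h0, haA⟩ ⟨le_trans h0 hx.1, le_trans hx.2 hbA⟩ hx.1)
    simpa [mul_comm] using this
  · have := intervalIntegral.integral_mono_on (f := f) (g := fun _ => f b) hab
      hint intervalIntegrable_const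
      (fun x hx => hm ⟨le_trans h0 hx.1, le_trans hx.2 hbA⟩ ⟨h0b, hbA⟩ hx.2)
    simpa [mul_comm] using this

private lemma aux_sub {f : ℝ → ℝ} {A : ℝ} (hc : ContinuousOn f (Set.Icc 0 A))
    {a b : ℝ} (h0 : 0 ≤ a) (haA : a ≤ A) (h0b : 0 ≤ b) (hbA : b ≤ A) :
    (∫ t in (0:ℝ)..b, f t) - (∫ t in (0:ℝ)..a, f t) = ∫ t in a..b, f t :=
  intervalIntegral.integral_interval_sub_left
    (aux_intg hc le_rfl (le_trans h0 haA) h0b hbA)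
    (aux_intg hc le_rfl (le_trans h0 haA) h0 haA)

private lemma aux_sum_ge {f : ℝ → ℝ} {A : ℝ} (hm : MonotoneOn f (Set.Icc 0 A))
    (hc : ContinuousOn f (Set.Icc 0 A)) (n i : ℕ) (hn : 0 < n) (hi : (i:ℝ)/n ≤ A) :
    (n:ℝ) * ∫ t in (0:ℝ)..((i:ℝ)/n), f t ≤ ∑ j ∈ Finset.Icc 1 i, f ((j:ℝ)/n) := by
  have hnR : (0:ℝ) < n := by exact_mod_cast hn
  have key : ∀ k : ℕ, k < i →
      (n:ℝ) * ((∫ t in (0:ℝ)..(((k:ℝ)+1)/n), f t) - (∫ t in (0:ℝ)..((k:ℝ)/n), f t))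
        ≤ f (((k:ℝ)+1)/n) := by
    intro k hk
    have hkA : ((k:ℝ)+1)/n ≤ A := le_trans (by
      apply div_le_div_of_nonneg_right ?_ hnR.le
      · exact_mod_cast Nat.succ_le_of_lt hk
      ) hi
    have h0k : (0:ℝ) ≤ (k:ℝ)/n := by positivity
    have hkk : (k:ℝ)/n ≤ ((k:ℝ)+1)/n := by
      apply div_le_div_of_nonneg_right (by linarith) hnR.le
    rw [aux_sub hc h0k (le_trans hkk hkA) (by positivity) hkA]
    have := (aux_step hm hc h0k hkk hkA).2
    have hd : ((k:ℝ)+1)/n - (k:ℝ)/n = 1/n := by field_simp; ring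
    rw [hd] at this
    calc (n:ℝ) * ∫ t in ((k:ℝ)/n)..(((k:ℝ)+1)/n), f t
        ≤ (n:ℝ) * (1/n * f (((k:ℝ)+1)/n)) := by
          exact mul_le_mul_of_nonneg_left this (le_of_lt hnR)
      _ = f (((k:ℝ)+1)/n) := by field_simp
  -- telescoping
  have tel : ∑ k ∈ Finset.range i,
      ((n:ℝ) * (∫ t in (0:ℝ)..(((k:ℝ)+1)/n), f t) - (n:ℝ) * ∫ t in (0:ℝ)..((k:ℝ)/n), f t)
      = (n:ℝ) * ∫ t in (0:ℝ)..((i:ℝ)/n), f t := by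
    have := Finset.sum_range_sub (fun k : ℕ => (n:ℝ) * ∫ t in (0:ℝ)..((k:ℝ)/n), f t) i
    simpa using this
  rw [← tel]
  rw [show Finset.Icc 1 i = Finset.Ico 1 (i+1) by rfl, Finset.sum_Ico_eq_sum_range]
  apply Finset.sum_le_sum
  intro k hk
  rw [Finset.mem_range] at hk
  have hk' : k < i := by omega
  have := key k hk'
  have hcast : ((1 + k : ℕ) : ℝ) = (k:ℝ) + 1 := by push_cast; ring
  rw [hcast]
  linarith [this]

private lemma aux_sum_le {f : ℝ → ℝ} {A : ℝ} (hm : MonotoneOn f (Set.Icc 0 A))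
    (hc : ContinuousOn f (Set.Icc 0 A)) (n i : ℕ) (hn : 0 < n) (hi : ((i:ℝ)+1)/n ≤ A) :
    ∑ j ∈ Finset.Icc 1 i, f ((j:ℝ)/n)
      ≤ (n:ℝ) * ((∫ t in (0:ℝ)..(((i:ℝ)+1)/n), f t) - ∫ t in (0:ℝ)..(1/(n:ℝ)), f t) := by
  have hnR : (0:ℝ) < n := by exact_mod_cast hn
  have key : ∀ k : ℕ, k < i →
      f (((k:ℝ)+1)/n) ≤
      (n:ℝ) * ((∫ t in (0:ℝ)..(((k:ℝ)+2)/n), f t) - (∫ t in (0:ℝ)..(((k:ℝ)+1)/n), f t)) := by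
    intro k hk
    have hkA : ((k:ℝ)+2)/n ≤ A := le_trans (by
      apply div_le_div_of_nonneg_right ?_ hnR.le
      · have : (k:ℝ) + 1 ≤ (i:ℝ) := by exact_mod_cast Nat.succ_le_of_lt hk
        linarith
      ) hi
    have h0k : (0:ℝ) ≤ ((k:ℝ)+1)/n := by positivity
    have hkk : ((k:ℝ)+1)/n ≤ ((k:ℝ)+2)/n := by
      apply div_le_div_of_nonneg_right (by linarith) hnR.le
    rw [aux_sub hc h0k (le_trans hkk hkA) (by positivity) hkA]
    have hstep := (aux_step hm hc h0k hkk hkA).1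
    have hd : ((k:ℝ)+2)/n - ((k:ℝ)+1)/n = 1/n := by field_simp; ring
    rw [hd] at hstep
    calc f (((k:ℝ)+1)/n) = (n:ℝ) * (1/n * f (((k:ℝ)+1)/n)) := by field_simp
      _ ≤ (n:ℝ) * ∫ t in (((k:ℝ)+1)/n)..(((k:ℝ)+2)/n), f t := by
          exact mul_le_mul_of_nonneg_left hstep hnR.le
  have tel : ∑ k ∈ Finset.range i,
      ((n:ℝ) * (∫ t in (0:ℝ)..(((((k+1):ℕ):ℝ)+1)/n), f t)
        - (n:ℝ) * ∫ t in (0:ℝ)..((((k:ℕ):ℝ)+1)/n), f t)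
      = (n:ℝ) * (∫ t in (0:ℝ)..(((i:ℝ)+1)/n), f t) - (n:ℝ) * ∫ t in (0:ℝ)..(1/(n:ℝ)), f t := by
    have := Finset.sum_range_sub (fun k : ℕ => (n:ℝ) * ∫ t in (0:ℝ)..(((k:ℝ)+1)/n), f t) i
    simpa using this
  rw [show Finset.Icc 1 i = Finset.Ico 1 (i+1) by rfl, Finset.sum_Ico_eq_sum_range,
    show i + 1 - 1 = i from rfl]
  calc ∑ k ∈ Finset.range i, f (((1+k : ℕ):ℝ)/n)
      ≤ ∑ k ∈ Finset.range i,
        ((n:ℝ) * (∫ t in (0:ℝ)..(((((k+1):ℕ):ℝ)+1)/n), f t)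
          - (n:ℝ) * ∫ t in (0:ℝ)..((((k:ℕ):ℝ)+1)/n), f t) := by
        apply Finset.sum_le_sum
        intro k hk
        rw [Finset.mem_range] at hk
        have := key k hk
        have hcast : ((1 + k : ℕ) : ℝ) = (k:ℝ) + 1 := by push_cast; ring
        have hcast2 : (((k+1):ℕ):ℝ) + 1 = (k:ℝ) + 2 := by push_cast; ring
        rw [hcast, hcast2]
        linarith [this]
    _ = _ := by rw [tel]; ring


set_option maxHeartbeats 2000000

/-- Proposition 3 (stochastic boundedness): under the standing assumptions, for
`η < ι < ω` (encoded by `0 < λ(ι)`, i.e. `ι < ω`, and `V(ι) > 0`, i.e. `ι > η`),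
and any sequence `m_n` with `m_n ≤ ⌊νn⌋` for some `ν < ι`,
`h_n(0, ⌊ιn⌋, m_n) → 1`; i.e. the chain hits `0` before `⌊ιn⌋` with probability
tending to one, so the rescaled process is asymptotically bounded by `η + ε`. -/
theorem process_stochastically_bounded (lam mu : ℝ → ℝ)
    (hlamc : ContinuousOn lam (Set.Ici 0)) (hmuc : ContinuousOn mu (Set.Ici 0))
    (hlamnn : ∀ x ∈ Set.Ici (0 : ℝ), 0 ≤ lam x) (hmunn : ∀ x ∈ Set.Ici (0 : ℝ), 0 ≤ mu x)
    (hanti : StrictAntiOn lam (Set.Ici 0)) (hmono : StrictMonoOn mu (Set.Ici 0))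
    (hmu0 : 0 < mu 0) (hlm0 : mu 0 < lam 0)
    (κ : ℝ) (hκ : 0 < κ) (hκeq : lam κ = mu κ)
    (ι : ℝ) (hι : 0 < ι) (hιω : 0 < lam ι) (hιη : 0 < Vpot lam mu ι)
    (ν : ℝ) (hν : ν < ι)
    (mn : ℕ → ℕ) (hmnle : ∀ n, mn n ≤ ⌊ν * (n : ℝ)⌋₊) :
    Tendsto (fun n : ℕ => hitProb lam mu n 0 (⌊ι * (n : ℝ)⌋₊) (mn n))
      atTop (nhds 1) := by
  set f : ℝ → ℝ := fun x => Real.log (mu x / lam x) with hfdef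
  set V : ℝ → ℝ := fun x => ∫ t in (0:ℝ)..x, f t with hVdef
  have hVι : 0 < V ι := hιη
  -- positivity facts
  have hlam_pos : ∀ x, 0 ≤ x → x ≤ ι → 0 < lam x := by
    intro x hx hxι
    rcases eq_or_lt_of_le hxι with h | h
    · rwa [h]
    · exact hιω.trans (hanti hx hι.le h)
  have hmu_pos : ∀ x, 0 ≤ x → 0 < mu x :=
    fun x hx => hmu0.trans_le (hmono.monotoneOn (Set.self_mem_Ici) hx hx)
  have hr_pos : ∀ x, 0 ≤ x → x ≤ ι → 0 < mu x / lam x :=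
    fun x hx hxι => div_pos (hmu_pos x hx) (hlam_pos x hx hxι)
  have hfmono : MonotoneOn f (Set.Icc 0 ι) := by
    intro x hx y hy hxy
    exact Real.log_le_log (hr_pos x hx.1 hx.2)
      (div_le_div₀ (hmunn y (Set.mem_Ici.mpr hy.1))
        (hmono.monotoneOn hx.1 hy.1 hxy) (hlam_pos y hy.1 hy.2)
        ((hanti.antitoneOn hx.1 hy.1 hxy)))
  have hfcont : ContinuousOn f (Set.Icc 0 ι) := by
    apply ContinuousOn.log
    · exact (hmuc.mono (fun x hx => hx.1)).div (hlamc.mono (fun x hx => hx.1))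
        (fun x hx => (hlam_pos x hx.1 hx.2).ne')
    · exact fun x hx => (hr_pos x hx.1 hx.2).ne'
  have hVsub : ∀ a b : ℝ, 0 ≤ a → a ≤ ι → 0 ≤ b → b ≤ ι →
      V b - V a = ∫ t in a..b, f t := fun a b h1 h2 h3 h4 => aux_sub hfcont h1 h2 h3 h4
  -- sign facts for f
  have hf_le : ∀ t, 0 ≤ t → t ≤ κ → t ≤ ι → f t ≤ 0 := by
    intro t h0 hκ' hι'
    apply Real.log_nonpos (hr_pos t h0 hι').le
    rw [div_le_one (hlam_pos t h0 hι')]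
    calc mu t ≤ mu κ := hmono.monotoneOn h0 hκ.le hκ'
      _ = lam κ := hκeq.symm
      _ ≤ lam t := hanti.antitoneOn h0 hκ.le hκ'
  have hf_ge : ∀ t, κ ≤ t → t ≤ ι → 0 ≤ f t := by
    intro t hκ' hι'
    have h0 : (0:ℝ) ≤ t := hκ.le.trans hκ'
    apply Real.log_nonneg
    rw [one_le_div (hlam_pos t h0 hι')]
    calc lam t ≤ lam κ := hanti.antitoneOn hκ.le h0 hκ'
      _ = mu κ := hκeq
      _ ≤ mu t := hmono.monotoneOn hκ.le h0 hκ'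
  have hf_pos : ∀ t, κ < t → t ≤ ι → 0 < f t := by
    intro t hκ' hι'
    have h0 : (0:ℝ) ≤ t := hκ.le.trans hκ'.le
    apply Real.log_pos
    rw [lt_div_iff₀ (hlam_pos t h0 hι')]
    calc 1 * lam t = lam t := one_mul _
      _ < lam κ := hanti hκ.le h0 hκ'
      _ = mu κ := hκeq
      _ < mu t := hmono hκ.le h0 hκ'
  -- V ≤ 0 on [0, κ]
  have hVnonpos : ∀ x, 0 ≤ x → x ≤ κ → x ≤ ι → V x ≤ 0 := by
    intro x h0 hκ' hι'
    have h := intervalIntegral.integral_mono_on (f := f) (g := fun _ => (0:ℝ)) h0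
      (aux_intg hfcont le_rfl hι.le h0 hι') intervalIntegrable_const
      (fun t ht => hf_le t ht.1 (ht.2.trans hκ') (ht.2.trans hι'))
    simpa using h
  set ν' : ℝ := max ν 0 with hν'def
  have hν'0 : 0 ≤ ν' := le_max_right _ _
  have hν'ι : ν' < ι := max_lt hν hι
  -- V bounded by M' on [0, ν']
  have hVM : ∀ x, 0 ≤ x → x ≤ ν' → V x ≤ max 0 (V ν') := by
    intro x h0 hxν
    have hxι : x ≤ ι := hxν.trans hν'ι.le
    by_cases hxκ : x ≤ κ
    · exact le_max_of_le_left (hVnonpos x h0 hxκ hxι)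
    · push_neg at hxκ
      apply le_max_of_le_right
      have : 0 ≤ V ν' - V x := by
        rw [hVsub x ν' h0 hxι hν'0 hν'ι.le]
        apply intervalIntegral.integral_nonneg hxν
        intro t ht
        exact hf_ge t (hxκ.le.trans ht.1) (ht.2.trans hν'ι.le)
      linarith
  -- the gap is positive
  have hgap0 : 0 < V ι - max 0 (V ν') := by
    rw [sub_pos]
    apply max_lt hVι
    by_cases hνκ : ν' ≤ κ
    · exact (hVnonpos ν' hν'0 hνκ hν'ι.le).trans_lt hVι
    · push_neg at hνκ
      have hstep := (aux_step hfmono hfcont hν'0 hν'ι.le le_rfl).1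
      have hsub := hVsub ν' ι hν'0 hν'ι.le hι.le le_rfl
      have hfν : 0 < f ν' := hf_pos ν' hνκ hν'ι.le
      nlinarith [mul_pos (sub_pos.mpr hν'ι) hfν]
  have hVapp : ∀ x : ℝ, (∫ t in (0:ℝ)..x, f t) = V x := fun x => rfl
  -- epsilon and its limit
  obtain ⟨C, hCdef⟩ : ∃ C : ℝ, C = (-(f 0)) + 2 * max (f ι) 0 := ⟨_, rfl⟩
  obtain ⟨gap, hgapdef⟩ : ∃ g : ℝ, g = V ι - max 0 (V ν') := ⟨_, rfl⟩
  have hgap : 0 < gap := by rw [hgapdef]; exact hgap0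
  obtain ⟨ε, hεdef⟩ : ∃ ε : ℕ → ℝ, ε = fun n : ℕ => ν' * n * Real.exp (C - gap * n) :=
    ⟨_, rfl⟩
  have hε0 : Tendsto ε atTop (𝓝 0) := by
    have h1 : Tendsto (fun x : ℝ => x * rexp (-x)) atTop (𝓝 0) := by
      simpa using tendsto_pow_mul_exp_neg_atTop_nhds_zero 1
    have h2 : Tendsto (fun n : ℕ => gap * (n:ℝ)) atTop atTop :=
      Tendsto.const_mul_atTop hgap tendsto_natCast_atTop_atTop
    have h3 := (h1.comp h2).const_mul (ν' * rexp C / gap)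
    rw [mul_zero] at h3
    apply h3.congr
    intro n
    show ν' * rexp C / gap * ((gap * (n:ℝ)) * rexp (-(gap * (n:ℝ)))) = ε n
    simp only [hεdef]
    rw [show C - gap * (n:ℝ) = C + (-(gap * (n:ℝ))) by ring, Real.exp_add,
      div_mul_eq_mul_div, div_eq_iff hgap.ne']
    ring
  -- main estimate
  have hmain : ∀ᶠ n : ℕ in atTop,
      1 - ε n ≤ hitProb lam mu n 0 (⌊ι * (n : ℝ)⌋₊) (mn n) ∧
      hitProb lam mu n 0 (⌊ι * (n : ℝ)⌋₊) (mn n) ≤ 1 := by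
    have hcn := tendsto_natCast_atTop_atTop (R := ℝ)
    filter_upwards [hcn.eventually_ge_atTop 1, hcn.eventually_ge_atTop (1/ι),
      hcn.eventually_gt_atTop (1/(ι - ν'))] with n hn1 hn2 hn3
    have hnR : (0:ℝ) < n := lt_of_lt_of_le one_pos hn1
    have hnn : 0 < n := by exact_mod_cast hnR
    set b : ℕ := ⌊ι * (n:ℝ)⌋₊ with hbdef
    have hbn : (b:ℝ) ≤ ι * n := Nat.floor_le (by positivity)
    have hbn' : ι * (n:ℝ) - 1 < (b:ℝ) := Nat.sub_one_lt_floor _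
    have hmν : (mn n : ℝ) ≤ ν' * n := by
      calc (mn n : ℝ) ≤ (⌊ν * (n:ℝ)⌋₊ : ℝ) := by exact_mod_cast hmnle n
        _ ≤ (⌊ν' * (n:ℝ)⌋₊ : ℝ) := by
            exact_mod_cast Nat.floor_le_floor
              (mul_le_mul_of_nonneg_right (le_max_left ν 0) hnR.le)
        _ ≤ ν' * n := Nat.floor_le (by positivity)
    have hν'b : ν' * (n:ℝ) < ι * n - 1 := by
      have h := (div_lt_iff₀ (sub_pos.mpr hν'ι)).mp hn3
      nlinarith
    have hmbR : (mn n : ℝ) < (b:ℝ) := by linarith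
    have hmb : mn n < b := by exact_mod_cast hmbR
    have hb1 : 1 ≤ b := by omega
    have hjι : ∀ j : ℕ, j ≤ b → (j:ℝ)/n ≤ ι := by
      intro j hj
      rw [div_le_iff₀ hnR]
      calc (j:ℝ) ≤ (b:ℝ) := by exact_mod_cast hj
        _ ≤ ι * n := hbn
    set P : ℕ → ℝ := fun i => ∏ j ∈ Finset.Icc 1 i, mu ((j:ℝ)/n) / lam ((j:ℝ)/n) with hPdef
    have hP_pos : ∀ i, i ≤ b → 0 < P i := by
      intro i hi
      apply Finset.prod_pos
      intro j hj
      rw [Finset.mem_Icc] at hj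
      exact hr_pos _ (by positivity) (hjι j (hj.2.trans hi))
    have hlogP : ∀ i, i ≤ b → Real.log (P i) = ∑ j ∈ Finset.Icc 1 i, f ((j:ℝ)/n) := by
      intro i hi
      apply Real.log_prod
      intro j hj
      rw [Finset.mem_Icc] at hj
      exact (hr_pos _ (by positivity) (hjι j (hj.2.trans hi))).ne'
    have hVn1 : f 0 ≤ (n:ℝ) * V (1/(n:ℝ)) := by
      have h1n : 1/(n:ℝ) ≤ ι := by
        rw [div_le_iff₀ hnR]
        have := (div_le_iff₀ hι).mp hn2
        linarith
      have hst := (aux_step hfmono hfcont le_rfl (by positivity) h1n).1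
      rw [hVapp] at hst
      have := mul_le_mul_of_nonneg_left hst hnR.le
      calc f 0 = (n:ℝ) * ((1/(n:ℝ) - 0) * f 0) := by field_simp; ring
        _ ≤ (n:ℝ) * V (1/(n:ℝ)) := this
    -- upper bound for head terms
    have hP_ub : ∀ i, i < mn n →
        P i ≤ rexp ((n:ℝ) * max 0 (V ν') + (-(f 0))) := by
      intro i hi
      have hib : i ≤ b := by omega
      have hi1m : (i:ℝ) + 1 ≤ (mn n : ℝ) := by exact_mod_cast hi
      have hi1 : ((i:ℝ)+1)/n ≤ ι := by
        rw [div_le_iff₀ hnR]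
        have : (ι * n - 1 : ℝ) < b := hbn'
        linarith
      have hsum := aux_sum_le hfmono hfcont n i hnn hi1
      rw [hVapp, hVapp] at hsum
      have hiν : ((i:ℝ)+1)/n ≤ ν' := by
        rw [div_le_iff₀ hnR]
        linarith
      have hVi := hVM (((i:ℝ)+1)/n) (by positivity) hiν
      rw [← Real.exp_log (hP_pos i hib)]
      apply Real.exp_le_exp.mpr
      rw [hlogP i hib]
      have h2 : (n:ℝ) * V (((i:ℝ)+1)/n) ≤ (n:ℝ) * max 0 (V ν') :=
        mul_le_mul_of_nonneg_left hVi hnR.le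
      calc ∑ j ∈ Finset.Icc 1 i, f ((j:ℝ)/n)
          ≤ (n:ℝ) * (V (((i:ℝ)+1)/n) - V (1/(n:ℝ))) := hsum
        _ = (n:ℝ) * V (((i:ℝ)+1)/n) - (n:ℝ) * V (1/(n:ℝ)) := by ring
        _ ≤ (n:ℝ) * max 0 (V ν') + (-(f 0)) := by linarith
    -- lower bound for the top term
    have hP_lb : rexp ((n:ℝ) * V ι - 2 * max (f ι) 0) ≤ P (b-1) := by
      have hcast : ((b-1:ℕ):ℝ) = (b:ℝ) - 1 := by
        push_cast [hb1]
        ring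
      have hbι : ((b-1:ℕ):ℝ)/n ≤ ι := hjι (b-1) (by omega)
      have hsum := aux_sum_ge hfmono hfcont n (b-1) hnn hbι
      rw [hVapp] at hsum
      have hx0 : (0:ℝ) ≤ ((b-1:ℕ):ℝ)/n := by positivity
      have h1 : V ι - V (((b-1:ℕ):ℝ)/n) = ∫ t in (((b-1:ℕ):ℝ)/n)..ι, f t :=
        hVsub _ ι hx0 hbι hι.le le_rfl
      have h2 : (∫ t in (((b-1:ℕ):ℝ)/n)..ι, f t) ≤ (ι - ((b-1:ℕ):ℝ)/n) * f ι :=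
        (aux_step hfmono hfcont hx0 hbι le_rfl).2
      have h3 : (ι - ((b-1:ℕ):ℝ)/n) * f ι ≤ (ι - ((b-1:ℕ):ℝ)/n) * max (f ι) 0 :=
        mul_le_mul_of_nonneg_left (le_max_left _ _) (by linarith)
      have h4 : (n:ℝ) * (ι - ((b-1:ℕ):ℝ)/n) ≤ 2 := by
        rw [hcast]
        have hc2 : (n:ℝ) * (((b:ℝ)-1)/n) = (b:ℝ)-1 := by field_simp
        rw [mul_sub, hc2]
        nlinarith
      have h5 : (n:ℝ) * (V ι - V (((b-1:ℕ):ℝ)/n)) ≤ 2 * max (f ι) 0 := by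
        calc (n:ℝ) * (V ι - V (((b-1:ℕ):ℝ)/n))
            ≤ (n:ℝ) * ((ι - ((b-1:ℕ):ℝ)/n) * max (f ι) 0) := by
              apply mul_le_mul_of_nonneg_left _ hnR.le
              rw [h1]; linarith
          _ = ((n:ℝ) * (ι - ((b-1:ℕ):ℝ)/n)) * max (f ι) 0 := by ring
          _ ≤ 2 * max (f ι) 0 := mul_le_mul_of_nonneg_right h4 (le_max_right _ _)
      rw [← Real.exp_log (hP_pos (b-1) (by omega))]
      apply Real.exp_le_exp.mpr
      rw [hlogP (b-1) (by omega)]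
      linarith
    -- sums
    have hform : hitProb lam mu n 0 b (mn n) =
        (∑ i ∈ Finset.Ico (mn n) b, P i) / (∑ i ∈ Finset.Ico 0 b, P i) := by
      simp only [hPdef, hitProb]
    have hsplit : (∑ i ∈ Finset.Ico 0 (mn n), P i) + (∑ i ∈ Finset.Ico (mn n) b, P i)
        = ∑ i ∈ Finset.Ico 0 b, P i := Finset.sum_Ico_consecutive _ (Nat.zero_le _) hmb.le
    have hS0_lb : rexp ((n:ℝ) * V ι - 2 * max (f ι) 0) ≤ ∑ i ∈ Finset.Ico 0 b, P i := by
      refine hP_lb.trans (Finset.single_le_sum (fun i hi => ?_) ?_)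
      · rw [Finset.mem_Ico] at hi
        exact (hP_pos i (by omega)).le
      · rw [Finset.mem_Ico]
        omega
    have hS0_pos : 0 < ∑ i ∈ Finset.Ico 0 b, P i := lt_of_lt_of_le (Real.exp_pos _) hS0_lb
    have hH_nonneg : 0 ≤ ∑ i ∈ Finset.Ico 0 (mn n), P i := by
      apply Finset.sum_nonneg
      intro i hi
      rw [Finset.mem_Ico] at hi
      exact (hP_pos i (by omega)).le
    have hH_ub : (∑ i ∈ Finset.Ico 0 (mn n), P i)
        ≤ (mn n : ℝ) * rexp ((n:ℝ) * max 0 (V ν') + (-(f 0))) := by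
      calc (∑ i ∈ Finset.Ico 0 (mn n), P i)
          ≤ ∑ _i ∈ Finset.Ico 0 (mn n), rexp ((n:ℝ) * max 0 (V ν') + (-(f 0))) := by
            apply Finset.sum_le_sum
            intro i hi
            rw [Finset.mem_Ico] at hi
            exact hP_ub i hi.2
        _ = (mn n : ℝ) * rexp ((n:ℝ) * max 0 (V ν') + (-(f 0))) := by
            rw [Finset.sum_const, Nat.card_Ico]
            simp [nsmul_eq_mul]
    have hHS : (∑ i ∈ Finset.Ico 0 (mn n), P i) / (∑ i ∈ Finset.Ico 0 b, P i) ≤ ε n := by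
      calc (∑ i ∈ Finset.Ico 0 (mn n), P i) / (∑ i ∈ Finset.Ico 0 b, P i)
          ≤ ((mn n : ℝ) * rexp ((n:ℝ) * max 0 (V ν') + (-(f 0))))
            / rexp ((n:ℝ) * V ι - 2 * max (f ι) 0) :=
            div_le_div₀ (by positivity) hH_ub (Real.exp_pos _) hS0_lb
        _ = (mn n : ℝ) * rexp (((n:ℝ) * max 0 (V ν') + (-(f 0)))
              - ((n:ℝ) * V ι - 2 * max (f ι) 0)) := by
            rw [mul_div_assoc, ← Real.exp_sub]
        _ ≤ ν' * n * rexp (((n:ℝ) * max 0 (V ν') + (-(f 0)))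
              - ((n:ℝ) * V ι - 2 * max (f ι) 0)) :=
            mul_le_mul_of_nonneg_right hmν (Real.exp_pos _).le
        _ = ε n := by
            simp only [hεdef]
            congr 1
            rw [hCdef, hgapdef]
            ring
    have heq : (∑ i ∈ Finset.Ico (mn n) b, P i) / (∑ i ∈ Finset.Ico 0 b, P i)
        = 1 - (∑ i ∈ Finset.Ico 0 (mn n), P i) / (∑ i ∈ Finset.Ico 0 b, P i) := by
      have h : (∑ i ∈ Finset.Ico (mn n) b, P i)
          = (∑ i ∈ Finset.Ico 0 b, P i) - (∑ i ∈ Finset.Ico 0 (mn n), P i) := by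
        linarith
      rw [h, sub_div, div_self hS0_pos.ne']
    constructor
    · rw [hform, heq]
      linarith
    · rw [hform]
      rw [div_le_one hS0_pos]
      linarith
  have g1 : Tendsto (fun n : ℕ => 1 - ε n) atTop (𝓝 1) := by
    have := tendsto_const_nhds (x := (1:ℝ)) (f := atTop (α := ℕ))
    simpa using this.sub hε0
  exact tendsto_of_tendsto_of_tendsto_of_le_of_le' g1 tendsto_const_nhds
    (hmain.mono fun n h => h.1) (hmain.mono fun n h => h.2)
end

section
/- (Discrete Laplace method, maximum at the left endpoint.) Let a_n, b_n be sequences of natural numbers with a_n/n → α and b_n/n → β, α < β. Let ψ be continuously differentiable and g continuous on an open interval containing [α, β], with g(α) ≠ 0, and let ε_n be functions on {a_n, a_n+1, …, b_n} with sup_{a_n ≤ i ≤ b_n} |ε_n(i)| → 0. If ψ(α) > ψ(x) for all x ∈ (α, β] and ψ'(α) < 0, then Σ_{i=a_n}^{b_n−1} (1 + ε_n(i))·g(i/n)·e^{n·ψ(i/n)} ∼ g(a_n/n)·e^{n·ψ(a_n/n)} / (1 − e^{ψ'(a_n/n)}). -/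
open Filter Topology Real BigOperators

set_option maxHeartbeats 1600000 in
/-- Discrete Laplace method, maximum at the left endpoint: if `a_n/n → α`, `b_n/n → β`,
`ψ` is C¹ and `g` continuous on an open set containing `[α, β]`, `g(α) ≠ 0`,
`ε_n → 0` uniformly on `{a_n, …, b_n}`, `ψ(α) > ψ(x)` for `x ∈ (α, β]` and `ψ'(α) < 0`,
then `∑_{i=a_n}^{b_n−1} (1+ε_n(i))·g(i/n)·e^{n·ψ(i/n)}
  ∼ g(a_n/n)·e^{n·ψ(a_n/n)} / (1 − e^{ψ'(a_n/n)})`. -/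
theorem discrete_laplace_left_endpoint (a b : ℕ → ℕ) (α β : ℝ) (hαβ : α < β)
    (ha : Tendsto (fun n : ℕ => (a n : ℝ) / n) atTop (nhds α))
    (hb : Tendsto (fun n : ℕ => (b n : ℝ) / n) atTop (nhds β))
    (U : Set ℝ) (hU : IsOpen U) (hIccU : Set.Icc α β ⊆ U)
    (ψ ψ' g : ℝ → ℝ)
    (hψ : ∀ x ∈ U, HasDerivAt ψ (ψ' x) x)
    (hψ'c : ContinuousOn ψ' U)
    (hg : ContinuousOn g U)
    (hgα : g α ≠ 0)
    (ε : ℕ → ℕ → ℝ)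
    (hε : ∀ δ > (0 : ℝ), ∃ N : ℕ, ∀ n ≥ N, ∀ i, a n ≤ i → i ≤ b n → |ε n i| < δ)
    (hmax : ∀ x, α < x → x ≤ β → ψ x < ψ α)
    (hψ'α : ψ' α < 0) :
    Tendsto (fun n : ℕ =>
      (∑ i ∈ Finset.Ico (a n) (b n),
          (1 + ε n i) * g ((i : ℝ) / n) * Real.exp ((n : ℝ) * ψ ((i : ℝ) / n))) /
      (g ((a n : ℝ) / n) * Real.exp ((n : ℝ) * ψ ((a n : ℝ) / n)) /
        (1 - Real.exp (ψ' ((a n : ℝ) / n)))))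
      atTop (nhds 1) := by
  -- notation
  set c : ℝ := ψ' α with hc
  set F : ℕ → ℕ → ℝ := fun n k =>
    if a n + k < b n then
      (1 + ε n (a n + k)) * (g (((a n + k : ℕ) : ℝ) / n) / g ((a n : ℝ) / n)) *
        Real.exp ((n : ℝ) * ψ (((a n + k : ℕ) : ℝ) / n) - (n : ℝ) * ψ ((a n : ℝ) / n))
    else 0 with hFdef
  have hαU : α ∈ U := hIccU ⟨le_refl α, hαβ.le⟩
  have hβU : β ∈ U := hIccU ⟨hαβ.le, le_refl β⟩
  have hψcont : ContinuousOn ψ U := fun x hx => (hψ x hx).continuousAt.continuousWithinAt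
  have hgαc : ContinuousAt g α := hg.continuousAt (hU.mem_nhds hαU)
  have hψαc : ContinuousAt ψ α := hψcont.continuousAt (hU.mem_nhds hαU)
  have hψβc : ContinuousAt ψ β := hψcont.continuousAt (hU.mem_nhds hβU)
  have hψ'αc : ContinuousAt ψ' α := hψ'c.continuousAt (hU.mem_nhds hαU)
  have hn1 : ∀ᶠ n : ℕ in atTop, 1 ≤ n := eventually_ge_atTop 1
  -- b n - a n grows linearly
  have hba : Tendsto (fun n : ℕ => (b n : ℝ) / n - (a n : ℝ) / n) atTop (nhds (β - α)) :=
    hb.sub ha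
  have hvlim : ∀ k : ℕ, Tendsto (fun n : ℕ => ((a n + k : ℕ) : ℝ) / n) atTop (nhds α) := by
    intro k
    have h0 : Tendsto (fun n : ℕ => (a n : ℝ) / n + (k : ℝ) / n) atTop (nhds (α + 0)) :=
      ha.add (tendsto_const_nhds.div_atTop tendsto_natCast_atTop_atTop)
    rw [add_zero] at h0
    refine h0.congr fun n => ?_
    push_cast
    ring
  -- eventually `a n + k < b n` for each fixed k
  have hklt : ∀ k : ℕ, ∀ᶠ n : ℕ in atTop, a n + k < b n := by
    intro k
    have h1 : ∀ᶠ n : ℕ in atTop, (β - α) / 2 < (b n : ℝ) / n - (a n : ℝ) / n :=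
      hba.eventually_const_lt (by linarith)
    have h2 : ∀ᶠ n : ℕ in atTop, (2 * (k + 1) : ℝ) / (β - α) < (n : ℝ) :=
      (tendsto_natCast_atTop_atTop (R := ℝ)).eventually_gt_atTop _
    filter_upwards [h1, h2, hn1] with n e1 e2 e3
    have hn0 : (0 : ℝ) < n := by exact_mod_cast e3
    have hβα : (0:ℝ) < β - α := by linarith
    have e4 : (β - α) / 2 * n < (b n : ℝ) - a n := by
      calc (β - α) / 2 * n < ((b n : ℝ) / n - (a n : ℝ) / n) * n :=
            mul_lt_mul_of_pos_right e1 hn0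
        _ = (b n : ℝ) - a n := by
            rw [sub_mul, div_mul_cancel₀ _ hn0.ne', div_mul_cancel₀ _ hn0.ne']
    have e5 : (k : ℝ) + 1 < (β - α) / 2 * n := by
      rw [div_lt_iff₀ hβα] at e2
      linarith
    have : (a n : ℝ) + k < b n := by linarith
    exact_mod_cast this
  -- pointwise limit of the exponent
  have hexp : ∀ k : ℕ, Tendsto
      (fun n : ℕ => (n : ℝ) * ψ (((a n + k : ℕ) : ℝ) / n) - (n : ℝ) * ψ ((a n : ℝ) / n))
      atTop (nhds ((k : ℝ) * c)) := by
    intro k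
    rw [Metric.tendsto_nhds]
    intro δ hδ
    have hδk : 0 < δ / (k + 1) := by positivity
    obtain ⟨r1, hr1, hr1U⟩ := Metric.isOpen_iff.mp hU α hαU
    obtain ⟨r2, hr2, hr2ψ⟩ := Metric.continuousAt_iff.mp hψ'αc (δ / (k + 1)) hδk
    have hrpos : 0 < min r1 r2 := lt_min hr1 hr2
    have hballU : Metric.ball α (min r1 r2) ⊆ U :=
      (Metric.ball_subset_ball (min_le_left _ _)).trans hr1U
    have haball : ∀ᶠ n : ℕ in atTop, (a n : ℝ) / n ∈ Metric.ball α (min r1 r2) :=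
      ha (Metric.ball_mem_nhds α hrpos)
    have hvball : ∀ᶠ n : ℕ in atTop, ((a n + k : ℕ) : ℝ) / n ∈ Metric.ball α (min r1 r2) :=
      hvlim k (Metric.ball_mem_nhds α hrpos)
    filter_upwards [haball, hvball, hn1] with n e1 e2 e3
    have hn0 : (0 : ℝ) < n := by exact_mod_cast e3
    rcases Nat.eq_zero_or_pos k with hk0 | hk0
    · subst hk0
      simp [Real.dist_eq, hδ]
    · have hlt : (a n : ℝ) / n < ((a n + k : ℕ) : ℝ) / n := by
        rw [div_lt_div_iff_of_pos_right hn0]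
        exact_mod_cast Nat.lt_add_of_pos_right hk0
      have hsub : Set.Icc ((a n : ℝ) / n) (((a n + k : ℕ) : ℝ) / n) ⊆
          Metric.ball α (min r1 r2) := ((convex_ball α (min r1 r2)).ordConnected).out e1 e2
      obtain ⟨ξ, hξ, hslope⟩ := exists_hasDerivAt_eq_slope ψ ψ' hlt
        (fun x hx => ((hψ x (hballU (hsub hx))).continuousAt).continuousWithinAt)
        (fun x hx => hψ x (hballU (hsub (Set.Ioo_subset_Icc_self hx))))
      have hξball : ξ ∈ Metric.ball α (min r1 r2) := hsub (Set.Ioo_subset_Icc_self hξ)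
      have hξr2 : dist ξ α < r2 := lt_of_lt_of_le (Metric.mem_ball.mp hξball) (min_le_right _ _)
      have hψ'ξ : |ψ' ξ - c| < δ / (k + 1) := by
        have := hr2ψ hξr2
        rwa [Real.dist_eq] at this
      have hne : (((a n + k : ℕ) : ℝ) / n) - (a n : ℝ) / n ≠ 0 := sub_ne_zero.mpr hlt.ne'
      have heq : ψ (((a n + k : ℕ) : ℝ) / n) - ψ ((a n : ℝ) / n) =
          ψ' ξ * ((((a n + k : ℕ) : ℝ) / n) - (a n : ℝ) / n) :=
        ((eq_div_iff hne).mp hslope).symm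
      have hnvu : (n : ℝ) * ((((a n + k : ℕ) : ℝ) / n) - (a n : ℝ) / n) = k := by
        push_cast
        field_simp
        ring
      have hval : (n : ℝ) * ψ (((a n + k : ℕ) : ℝ) / n) - (n : ℝ) * ψ ((a n : ℝ) / n)
          = (k : ℝ) * ψ' ξ := by
        rw [← mul_sub, heq]
        rw [show (n : ℝ) * (ψ' ξ * ((((a n + k : ℕ) : ℝ) / n) - (a n : ℝ) / n))
            = ψ' ξ * ((n : ℝ) * ((((a n + k : ℕ) : ℝ) / n) - (a n : ℝ) / n)) by ring, hnvu]
        ring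
      rw [Real.dist_eq, hval, ← mul_sub, abs_mul, Nat.abs_cast]
      have hk1 : (1 : ℝ) ≤ (k : ℝ) := by exact_mod_cast hk0
      calc (k : ℝ) * |ψ' ξ - c| ≤ (k : ℝ) * (δ / (k + 1)) := by
            exact mul_le_mul_of_nonneg_left hψ'ξ.le (by positivity)
        _ < δ := by
            rw [mul_div_assoc'] 
            rw [div_lt_iff₀ (by positivity)]
            nlinarith
  -- pointwise limit of F
  have hFlim : ∀ k : ℕ, Tendsto (fun n => F n k) atTop (nhds (Real.exp c ^ k)) := by
    intro k
    have h1 : Tendsto (fun n => ε n (a n + k)) atTop (nhds 0) := by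
      rw [Metric.tendsto_nhds]
      intro δ hδ
      obtain ⟨N, hN⟩ := hε δ hδ
      filter_upwards [hklt k, eventually_ge_atTop N] with n e1 e2
      simpa [Real.dist_eq] using hN n e2 _ (Nat.le_add_right _ _) e1.le
    have h2 : Tendsto (fun n : ℕ => g (((a n + k : ℕ) : ℝ) / n) / g ((a n : ℝ) / n))
        atTop (nhds 1) := by
      have := (hgαc.tendsto.comp (hvlim k)).div (hgαc.tendsto.comp ha) hgα
      simp only [Function.comp_def] at this
      rwa [div_self hgα] at this
    have h3 : Tendsto (fun n : ℕ =>
        Real.exp ((n : ℝ) * ψ (((a n + k : ℕ) : ℝ) / n) - (n : ℝ) * ψ ((a n : ℝ) / n)))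
        atTop (nhds (Real.exp ((k : ℝ) * c))) :=
      (Real.continuous_exp.tendsto _).comp (hexp k)
    have h4 : Tendsto (fun n : ℕ => (1 + ε n (a n + k)) *
        (g (((a n + k : ℕ) : ℝ) / n) / g ((a n : ℝ) / n)) *
        Real.exp ((n : ℝ) * ψ (((a n + k : ℕ) : ℝ) / n) - (n : ℝ) * ψ ((a n : ℝ) / n)))
        atTop (nhds ((1 + 0) * 1 * Real.exp ((k : ℝ) * c))) :=
      ((tendsto_const_nhds.add h1).mul h2).mul h3
    rw [show ((1:ℝ) + 0) * 1 * Real.exp ((k : ℝ) * c) = Real.exp c ^ k by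
      rw [Real.exp_nat_mul]; ring] at h4
    apply h4.congr'
    filter_upwards [hklt k] with n e1
    simp only [hFdef, if_pos e1]
  -- dominating geometric bound
  obtain ⟨C, ρ, hρ0, hρ1, hCpos, hbound⟩ :
      ∃ (C ρ : ℝ), 0 < ρ ∧ ρ < 1 ∧ 0 ≤ C ∧
        ∀ᶠ n : ℕ in atTop, ∀ k : ℕ, ‖F n k‖ ≤ C * ρ ^ k := by
    have hβα : (0 : ℝ) < β - α := by linarith
    -- a compact neighborhood of [α, β] inside U
    obtain ⟨θ, hθ, hKU⟩ : ∃ θ > 0, Set.Icc (α - θ) (β + θ) ⊆ U := by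
      obtain ⟨θ', hθ', hsub⟩ :=
        (isCompact_Icc (a := α) (b := β)).exists_thickening_subset_open hU hIccU
      refine ⟨θ' / 2, by positivity, fun x hx => hsub ?_⟩
      rw [Metric.mem_thickening_iff]
      refine ⟨max α (min x β), ⟨le_max_left _ _, max_le hαβ.le (min_le_right _ _)⟩, ?_⟩
      rw [Real.dist_eq]
      rcases le_total x α with h1 | h1
      · rw [min_eq_left (h1.trans hαβ.le), max_eq_left h1, abs_sub_lt_iff]
        constructor <;> [linarith; linarith [hx.1]]
      · rcases le_total x β with h2 | h2
        · rw [min_eq_left h2, max_eq_right h1, sub_self, abs_zero]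
          linarith
        · rw [min_eq_right h2, max_eq_right hαβ.le, abs_sub_lt_iff]
          constructor <;> [linarith [hx.2]; linarith]
    -- bound for g on the compact set
    obtain ⟨G0, hG0⟩ := (isCompact_Icc (a := α - θ) (b := β + θ)).exists_bound_of_continuousOn
      (hg.mono hKU)
    set G := max G0 1 with hGdef
    have hG1 : (1 : ℝ) ≤ G := le_max_right _ _
    have hGb : ∀ x ∈ Set.Icc (α - θ) (β + θ), |g x| ≤ G := fun x hx =>
      le_trans (le_of_eq (Real.norm_eq_abs _).symm) ((hG0 x hx).trans (le_max_left _ _))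
    -- a small interval around α where ψ' ≤ c/2
    obtain ⟨r2, hr2pos, hr2⟩ := Metric.continuousAt_iff.mp hψ'αc (-c / 2) (by linarith)
    set δ1 := min (min (r2 / 2) θ) ((β - α) / 2) with hδ1def
    have hδ1pos : 0 < δ1 := lt_min (lt_min (by linarith) hθ) (by linarith)
    have hδ1θ : δ1 ≤ θ := le_trans (min_le_left _ _) (min_le_right _ _)
    have hδ1β : δ1 < β - α := lt_of_le_of_lt (min_le_right _ _) (by linarith)
    have hψ'le : ∀ x : ℝ, |x - α| ≤ δ1 → ψ' x ≤ c / 2 := by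
      intro x hx
      have hd : dist x α < r2 := by
        rw [Real.dist_eq]
        have h1 : δ1 ≤ r2 / 2 := le_trans (min_le_left _ _) (min_le_left _ _)
        linarith
      have h := hr2 hd
      rw [Real.dist_eq] at h
      rcases abs_lt.mp h with ⟨h1, h2⟩
      rw [hc]
      linarith
    -- the maximum of ψ away from the endpoint
    obtain ⟨x0, hx0mem, hx0max⟩ := (isCompact_Icc (a := α + δ1) (b := β)).exists_isMaxOn
      (Set.nonempty_Icc.mpr (by linarith))
      (hψcont.mono fun x hx => hIccU ⟨by linarith [hx.1], hx.2⟩)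
    have hη : 0 < ψ α - ψ x0 := sub_pos.mpr (hmax x0 (by linarith [hx0mem.1]) hx0mem.2)
    set η := ψ α - ψ x0 with hηdef
    -- continuity of ψ at β
    obtain ⟨r3, hr3pos, hr3⟩ := Metric.continuousAt_iff.mp hψβc (η / 2) (by linarith)
    set ε2 := min (r3 / 2) θ with hε2def
    have hε2pos : 0 < ε2 := lt_min (by linarith) hθ
    have hε2θ : ε2 ≤ θ := min_le_right _ _
    have hstep : ∀ x : ℝ, α + δ1 ≤ x → x ≤ β + ε2 → ψ x ≤ ψ α - η / 2 := by
      intro x h1 h2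
      rcases le_total x β with h3 | h3
      · have := hx0max ⟨h1, h3⟩
        simp only [Set.mem_setOf_eq] at this
        linarith
      · have hd : dist x β < r3 := by
          rw [Real.dist_eq, abs_of_nonneg (by linarith)]
          have : ε2 ≤ r3 / 2 := min_le_left _ _
          linarith
        have h4 := hr3 hd
        rw [Real.dist_eq] at h4
        rcases abs_lt.mp h4 with ⟨h5, h6⟩
        have hψβx0 : ψ β ≤ ψ x0 := hx0max ⟨by linarith, le_refl β⟩
        linarith
    -- constants
    have hgαpos : 0 < |g α| := abs_pos.mpr hgα
    set ρ := max (Real.exp (c / 2)) (Real.exp (-(η / (8 * (β - α))))) with hρdef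
    have hρ0 : 0 < ρ := lt_of_lt_of_le (Real.exp_pos _) (le_max_left _ _)
    have hρ1 : ρ < 1 := by
      apply max_lt <;> rw [Real.exp_lt_one_iff]
      · linarith
      · have : 0 < η / (8 * (β - α)) := by positivity
        linarith
    have hCnn : (0 : ℝ) ≤ 2 * (G / (|g α| / 2)) := by positivity
    refine ⟨2 * (G / (|g α| / 2)), ρ, hρ0, hρ1, hCnn, ?_⟩
    -- the eventual bound
    obtain ⟨N4, hN4⟩ := hε 1 one_pos
    have E2 : ∀ᶠ n : ℕ in atTop, dist ((a n : ℝ) / n) α < δ1 :=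
      Metric.tendsto_nhds.mp ha δ1 hδ1pos
    have E3 : ∀ᶠ n : ℕ in atTop, (b n : ℝ) / n < β + ε2 :=
      hb.eventually_lt_const (by linarith)
    have E5 : ∀ᶠ n : ℕ in atTop, |g α| / 2 < |g ((a n : ℝ) / n)| :=
      (((continuous_abs.continuousAt (x := g α)).comp hgαc).tendsto.comp ha).eventually_const_lt
        (by simpa using half_lt_self hgαpos)
    have E6 : ∀ᶠ n : ℕ in atTop, ψ α - η / 4 < ψ ((a n : ℝ) / n) :=
      (hψαc.tendsto.comp ha).eventually_const_lt (by linarith)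
    have E7 : ∀ᶠ n : ℕ in atTop, (b n : ℝ) / n - (a n : ℝ) / n < 2 * (β - α) :=
      hba.eventually_lt_const (by linarith)
    filter_upwards [hn1, E2, E3, eventually_ge_atTop N4, E5, E6, E7]
      with n e1 e2 e3 e4 e5 e6 e7
    intro k
    by_cases hik : a n + k < b n
    swap
    · simp only [hFdef, if_neg hik, norm_zero]
      positivity
    have hn0 : (0 : ℝ) < n := by exact_mod_cast e1
    have huα : |(a n : ℝ) / n - α| < δ1 := by rwa [Real.dist_eq] at e2
    rcases abs_lt.mp huα with ⟨huα1, huα2⟩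
    have hxu : ((a n + k : ℕ) : ℝ) / n - (a n : ℝ) / n = (k : ℝ) / n := by
      push_cast
      ring
    have hux : (a n : ℝ) / n ≤ ((a n + k : ℕ) : ℝ) / n := by
      have : (0 : ℝ) ≤ (k : ℝ) / n := by positivity
      linarith
    have hxb : ((a n + k : ℕ) : ℝ) / n < (b n : ℝ) / n := by
      rw [div_lt_div_iff_of_pos_right hn0]
      exact_mod_cast hik
    have hxβ : ((a n + k : ℕ) : ℝ) / n < β + ε2 := hxb.trans_le e3.le
    have hxK : ((a n + k : ℕ) : ℝ) / n ∈ Set.Icc (α - θ) (β + θ) :=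
      ⟨by linarith, by linarith⟩
    have huK : (a n : ℝ) / n ∈ Set.Icc (α - θ) (β + θ) :=
      ⟨by linarith, by linarith⟩
    have hkub : (k : ℝ) ≤ 2 * (β - α) * n := by
      have h1 : (k : ℝ) ≤ (b n : ℝ) - a n := by
        have : (a n : ℝ) + k ≤ b n := by exact_mod_cast hik.le
        linarith
      have h2 : (b n : ℝ) - a n = ((b n : ℝ) / n - (a n : ℝ) / n) * n := by
        rw [sub_mul, div_mul_cancel₀ _ hn0.ne', div_mul_cancel₀ _ hn0.ne']
      have h3 : ((b n : ℝ) / n - (a n : ℝ) / n) * n ≤ 2 * (β - α) * n :=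
        mul_le_mul_of_nonneg_right e7.le hn0.le
      linarith
    -- the key exponential bound
    have hexpb : Real.exp ((n : ℝ) * ψ (((a n + k : ℕ) : ℝ) / n)
        - (n : ℝ) * ψ ((a n : ℝ) / n)) ≤ ρ ^ k := by
      rcases le_or_gt (((a n + k : ℕ) : ℝ) / n) (α + δ1) with hcase | hcase
      · -- near the endpoint : mean value theorem
        rcases Nat.eq_zero_or_pos k with hk0 | hk0
        · subst hk0
          simp
        · have hlt : (a n : ℝ) / n < ((a n + k : ℕ) : ℝ) / n := by
            rw [div_lt_div_iff_of_pos_right hn0]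
            exact_mod_cast Nat.lt_add_of_pos_right hk0
          have hIsub : Set.Icc ((a n : ℝ) / n) (((a n + k : ℕ) : ℝ) / n) ⊆
              Set.Icc (α - δ1) (α + δ1) := Set.Icc_subset_Icc (by linarith) hcase
          have hI2U : Set.Icc (α - δ1) (α + δ1) ⊆ U := fun y hy =>
            hKU ⟨by linarith [hy.1], by linarith [hy.2]⟩
          obtain ⟨ξ, hξ, hslope⟩ := exists_hasDerivAt_eq_slope ψ ψ' hlt
            (fun x hx => ((hψ x (hI2U (hIsub hx))).continuousAt).continuousWithinAt)
            (fun x hx => hψ x (hI2U (hIsub (Set.Ioo_subset_Icc_self hx))))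
          have hξI : ξ ∈ Set.Icc (α - δ1) (α + δ1) := hIsub (Set.Ioo_subset_Icc_self hξ)
          have hψ'ξ : ψ' ξ ≤ c / 2 :=
            hψ'le ξ (abs_le.mpr ⟨by linarith [hξI.1], by linarith [hξI.2]⟩)
          have hne : (((a n + k : ℕ) : ℝ) / n) - (a n : ℝ) / n ≠ 0 := sub_ne_zero.mpr hlt.ne'
          have heq : ψ (((a n + k : ℕ) : ℝ) / n) - ψ ((a n : ℝ) / n) =
              ψ' ξ * ((((a n + k : ℕ) : ℝ) / n) - (a n : ℝ) / n) :=
            ((eq_div_iff hne).mp hslope).symm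
          have hnvu : (n : ℝ) * ((((a n + k : ℕ) : ℝ) / n) - (a n : ℝ) / n) = k := by
            push_cast
            field_simp
            ring
          have hval : (n : ℝ) * ψ (((a n + k : ℕ) : ℝ) / n) - (n : ℝ) * ψ ((a n : ℝ) / n)
              = (k : ℝ) * ψ' ξ := by
            rw [← mul_sub, heq, show (n : ℝ) * (ψ' ξ *
                ((((a n + k : ℕ) : ℝ) / n) - (a n : ℝ) / n)) = ψ' ξ *
                ((n : ℝ) * ((((a n + k : ℕ) : ℝ) / n) - (a n : ℝ) / n)) by ring, hnvu]
            ring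
          rw [hval]
          calc Real.exp ((k : ℝ) * ψ' ξ) ≤ Real.exp ((k : ℝ) * (c / 2)) :=
                Real.exp_le_exp.mpr (mul_le_mul_of_nonneg_left hψ'ξ (Nat.cast_nonneg k))
            _ = Real.exp (c / 2) ^ k := Real.exp_nat_mul _ k
            _ ≤ ρ ^ k := pow_le_pow_left₀ (Real.exp_pos _).le (le_max_left _ _) k
      · -- away from the endpoint : use the strict maximality
        have h1 : ψ (((a n + k : ℕ) : ℝ) / n) ≤ ψ α - η / 2 :=
          hstep _ hcase.le hxβ.le
        have h2 : (n : ℝ) * ψ (((a n + k : ℕ) : ℝ) / n) - (n : ℝ) * ψ ((a n : ℝ) / n)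
            ≤ -((n : ℝ) * η / 4) := by
          have h3 := mul_le_mul_of_nonneg_left h1 hn0.le
          have h4 := mul_le_mul_of_nonneg_left e6.le hn0.le
          have h9 : (n : ℝ) * (ψ α - η / 2) = (n : ℝ) * ψ α - (n : ℝ) * η / 2 := by ring
          have h10 : (n : ℝ) * (ψ α - η / 4) = (n : ℝ) * ψ α - (n : ℝ) * η / 4 := by ring
          rw [h9] at h3
          rw [h10] at h4
          linarith
        have h5 : -((n : ℝ) * η / 4) ≤ -((k : ℝ) * (η / (8 * (β - α)))) := by
          have h6 : (0 : ℝ) < η / (8 * (β - α)) := by positivity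
          have h7 := mul_le_mul_of_nonneg_right hkub h6.le
          have h8 : 2 * (β - α) * (n : ℝ) * (η / (8 * (β - α))) = (n : ℝ) * η / 4 := by
            field_simp
            ring
          rw [h8] at h7
          linarith
        calc Real.exp ((n : ℝ) * ψ (((a n + k : ℕ) : ℝ) / n) - (n : ℝ) * ψ ((a n : ℝ) / n))
              ≤ Real.exp (-((k : ℝ) * (η / (8 * (β - α))))) :=
                Real.exp_le_exp.mpr (h2.trans h5)
          _ = Real.exp (-(η / (8 * (β - α)))) ^ k := by
                rw [← Real.exp_nat_mul]
                ring_nf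
          _ ≤ ρ ^ k := pow_le_pow_left₀ (Real.exp_pos _).le (le_max_right _ _) k
    -- assembling the bound
    simp only [hFdef, if_pos hik, Real.norm_eq_abs]
    rw [abs_mul, abs_mul, Real.abs_exp, abs_div]
    have hA : |1 + ε n (a n + k)| ≤ 2 := by
      have h1 := hN4 n e4 (a n + k) (Nat.le_add_right _ _) hik.le
      calc |1 + ε n (a n + k)| ≤ |(1 : ℝ)| + |ε n (a n + k)| := abs_add_le _ _
        _ ≤ 2 := by rw [abs_one]; linarith
    have hB : |g (((a n + k : ℕ) : ℝ) / n)| / |g ((a n : ℝ) / n)| ≤ G / (|g α| / 2) :=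
      div_le_div₀ (by linarith) (hGb _ hxK) (by positivity) e5.le
    exact mul_le_mul (mul_le_mul hA hB (by positivity) (by norm_num)) hexpb
      (Real.exp_pos _).le hCnn
  -- dominated convergence
  have hsum : Summable (fun k : ℕ => C * ρ ^ k) :=
    (summable_geometric_of_lt_one hρ0.le hρ1).mul_left C
  have hT : Tendsto (fun n => ∑' k, F n k) atTop (nhds (∑' k : ℕ, Real.exp c ^ k)) :=
    tendsto_tsum_of_dominated_convergence hsum hFlim hbound
  have hexpc1 : Real.exp c < 1 := Real.exp_lt_one_iff.mpr hψ'α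
  have htsum : (∑' k : ℕ, Real.exp c ^ k) = (1 - Real.exp c)⁻¹ :=
    tsum_geometric_of_lt_one (Real.exp_pos c).le hexpc1
  have hone : Tendsto (fun n : ℕ => 1 - Real.exp (ψ' ((a n : ℝ) / n))) atTop
      (nhds (1 - Real.exp c)) :=
    tendsto_const_nhds.sub ((Real.continuous_exp.continuousAt.comp hψ'αc).tendsto.comp ha)
  have hmul : Tendsto (fun n : ℕ => (∑' k, F n k) * (1 - Real.exp (ψ' ((a n : ℝ) / n))))
      atTop (nhds 1) := by
    have := hT.mul hone
    rw [htsum, inv_mul_cancel₀ (by linarith)] at this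
    exact this
  -- identify the target with the product above
  have hEq : ∀ n : ℕ,
      (∑ i ∈ Finset.Ico (a n) (b n),
          (1 + ε n i) * g ((i : ℝ) / n) * Real.exp ((n : ℝ) * ψ ((i : ℝ) / n))) /
      (g ((a n : ℝ) / n) * Real.exp ((n : ℝ) * ψ ((a n : ℝ) / n)) /
        (1 - Real.exp (ψ' ((a n : ℝ) / n)))) =
      (∑' k, F n k) * (1 - Real.exp (ψ' ((a n : ℝ) / n))) := by
    intro n
    have hts : (∑' k, F n k) =
        (∑ i ∈ Finset.Ico (a n) (b n),
          (1 + ε n i) * g ((i : ℝ) / n) * Real.exp ((n : ℝ) * ψ ((i : ℝ) / n))) /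
        (g ((a n : ℝ) / n) * Real.exp ((n : ℝ) * ψ ((a n : ℝ) / n))) := by
      rw [tsum_eq_sum (s := Finset.range (b n - a n))
        (fun k hk => by
          have hk' : ¬ a n + k < b n := by
            rw [Finset.mem_range] at hk
            omega
          simp only [hFdef, if_neg hk'])]
      rw [Finset.sum_div, Finset.sum_Ico_eq_sum_range]
      apply Finset.sum_congr rfl
      intro k hk
      rw [Finset.mem_range] at hk
      have hik : a n + k < b n := by omega
      simp only [hFdef, if_pos hik]
      rw [Real.exp_sub]
      ring
    rw [div_div_eq_mul_div, hts, div_mul_eq_mul_div]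
  exact hmul.congr (fun n => (hEq n).symm)
end

section
/- (Logarithmic asymptotics of the time to reach carrying capacity.) Under the standing assumptions, suppose additionally that λ and μ are twice continuously differentiable on a neighbourhood of [0, κ] and that λ'(κ) − μ'(κ) < 0. Then Σ_{i=1}^{⌊κn⌋−1} 1 / ( (λ(i/n) − μ(i/n)) · i ) ∼ ( 1/(λ(0) − μ(0)) − 1/((λ'(κ) − μ'(κ))·κ) ) · log n, i.e. the ratio of the left-hand side to the right-hand side tends to 1 as n → ∞. -/
open Filter Topology Real BigOperators

lemma harm_lower : ∀ k : ℕ, 1 ≤ k → Real.log k ≤ ∑ j ∈ Finset.Ico 1 k, (1:ℝ)/j := by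
  intro k hk
  induction k with
  | zero => omega
  | succ k ih =>
    rcases Nat.eq_or_lt_of_le hk with h | h
    · simp [← h]
    · have hk1 : 1 ≤ k := by omega
      have hkpos : (0:ℝ) < k := by exact_mod_cast hk1
      rw [Finset.sum_Ico_succ_top hk1]
      have h1 : Real.log ((k+1:ℕ)) ≤ Real.log k + 1/k := by
        have he : Real.log ((k+1:ℕ)) - Real.log k = Real.log ((k+1:ℕ)/k) := by
          rw [Real.log_div (by positivity) (ne_of_gt hkpos)]
        have h2 : Real.log ((k+1:ℕ)/(k:ℝ)) ≤ (k+1:ℕ)/(k:ℝ) - 1 :=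
          Real.log_le_sub_one_of_pos (by positivity)
        have h3 : ((k+1:ℕ):ℝ)/(k:ℝ) - 1 = 1/k := by
          push_cast; field_simp; ring
        linarith [he ▸ (h3 ▸ h2)]
      calc Real.log ((k+1:ℕ)) ≤ Real.log k + 1/k := h1
        _ ≤ (∑ j ∈ Finset.Ico 1 k, (1:ℝ)/j) + 1/k := by linarith [ih hk1]

lemma harm_upper' : ∀ k : ℕ, 1 ≤ k → ∑ j ∈ Finset.Ico 1 (k+1), (1:ℝ)/j ≤ 1 + Real.log k := by
  intro k hk
  induction k with
  | zero => omega
  | succ k ih =>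
    rcases Nat.eq_zero_or_pos k with h | h
    · subst h
      norm_num
    have hk1 : 1 ≤ k := h
    have hkpos : (0:ℝ) < k := by exact_mod_cast hk1
    rw [Finset.sum_Ico_succ_top (by omega : 1 ≤ k+1)]
    have key : (1:ℝ)/((k+1:ℕ):ℝ) ≤ Real.log ((k+1:ℕ)) - Real.log k := by
      have h2 : Real.log ((k:ℝ)/((k+1:ℕ):ℝ)) ≤ (k:ℝ)/((k+1:ℕ):ℝ) - 1 :=
        Real.log_le_sub_one_of_pos (by positivity)
      have he : Real.log ((k:ℝ)/((k+1:ℕ):ℝ)) = Real.log k - Real.log ((k+1:ℕ)) := by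
        rw [Real.log_div (ne_of_gt hkpos) (by positivity)]
      have h3 : (k:ℝ)/((k+1:ℕ):ℝ) - 1 = -(1/((k+1:ℕ):ℝ)) := by
        push_cast; field_simp; ring
      rw [he, h3] at h2; linarith
    have := ih hk1
    push_cast at key ⊢
    push_cast at this
    linarith

lemma harm_upper (k : ℕ) : ∑ j ∈ Finset.Ico 1 k, (1:ℝ)/j ≤ 1 + Real.log k := by
  rcases k with _ | k
  · simp
  rcases Nat.eq_zero_or_pos k with h0 | h0
  · subst h0; norm_num
  have h1 := harm_upper' k h0
  have hkpos : (0:ℝ) < k := by exact_mod_cast h0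
  have hlog : Real.log k ≤ Real.log (k+1:ℕ) := Real.log_le_log hkpos (by push_cast; linarith)
  exact le_trans h1 (by push_cast at hlog ⊢; linarith)


set_option maxHeartbeats 1000000 in
lemma hbound (f f' f'' : ℝ → ℝ) (κ : ℝ) (hκ : 0 < κ) (U : Set ℝ) (hU : IsOpen U)
    (hκU : Set.Icc 0 κ ⊆ U)
    (hd : ∀ x ∈ U, HasDerivAt f (f' x) x)
    (hd2 : ∀ x ∈ U, HasDerivAt f' (f'' x) x)
    (h''c : ContinuousOn f'' U)
    (hfpos : ∀ x ∈ Set.Ico 0 κ, 0 < f x)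
    (hfκ : f κ = 0)
    (hF' : f' κ < 0) :
    ∃ M : ℝ, 0 < M ∧ ∀ x ∈ Set.Ioo 0 κ,
      |1/(f x * x) - 1/(f 0 * x) - 1/(f' κ * κ * (x - κ))| ≤ M := by
  have hcpt : IsCompact (Set.Icc (0:ℝ) κ) := isCompact_Icc
  have hconv : Convex ℝ (Set.Icc (0:ℝ) κ) := convex_Icc 0 κ
  -- continuity of f, f' on U
  have hfc : ContinuousOn f U := fun x hx => ((hd x hx).continuousAt).continuousWithinAt
  have hf'c : ContinuousOn f' U := fun x hx => ((hd2 x hx).continuousAt).continuousWithinAt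
  -- bounds on |f'|, |f''| on Icc
  obtain ⟨M₁, hM₁⟩ := hcpt.exists_bound_of_continuousOn (hf'c.mono hκU)
  obtain ⟨M₂₀, hM₂₀⟩ := hcpt.exists_bound_of_continuousOn (h''c.mono hκU)
  set M₂ : ℝ := M₂₀ + 1 with hM₂def
  have hM₂pos : 0 < M₂ := by
    have := hM₂₀ κ (Set.right_mem_Icc.2 (le_of_lt hκ)); simp at this
    have : 0 ≤ M₂₀ := le_trans (abs_nonneg _) this
    simp [hM₂def]; linarith
  have hM₂ : ∀ x ∈ Set.Icc 0 κ, ‖f'' x‖ ≤ M₂ := fun x hx => by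
    have := hM₂₀ x hx; simp [hM₂def]; rw [Real.norm_eq_abs] at this; linarith
  clear_value M₂
  have hM₁pos : 0 < M₁ + 1 := by
    have := hM₁ κ (Set.right_mem_Icc.2 (le_of_lt hκ))
    have := le_trans (norm_nonneg _) this; linarith
  -- MVT: |f x - f 0| ≤ (M₁+1) x on Icc
  have mvt1 : ∀ x ∈ Set.Icc (0:ℝ) κ, |f x - f 0| ≤ (M₁+1) * x := by
    intro x hx
    have h := Convex.norm_image_sub_le_of_norm_hasDerivWithin_le
      (f := f) (f' := f') (C := M₁+1)
      (fun y hy => ((hd y (hκU hy)).hasDerivWithinAt))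
      (fun y hy => le_trans (hM₁ y hy) (by linarith)) hconv
      (Set.left_mem_Icc.2 (le_of_lt hκ)) hx
    rw [Real.norm_eq_abs, Real.norm_eq_abs] at h
    calc |f x - f 0| ≤ (M₁+1) * |x - 0| := h
      _ = (M₁+1) * x := by rw [sub_zero, abs_of_nonneg hx.1]
  -- MVT on f': |f' y - f' κ| ≤ M₂ (κ - y) on Icc
  have mvt2 : ∀ y ∈ Set.Icc (0:ℝ) κ, |f' y - f' κ| ≤ M₂ * (κ - y) := by
    intro y hy
    have h := Convex.norm_image_sub_le_of_norm_hasDerivWithin_le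
      (f := f') (f' := f'') (C := M₂)
      (fun z hz => ((hd2 z (hκU hz)).hasDerivWithinAt)) hM₂ hconv
      (Set.right_mem_Icc.2 (le_of_lt hκ)) hy
    rw [Real.norm_eq_abs, Real.norm_eq_abs] at h
    calc |f' y - f' κ| ≤ M₂ * |y - κ| := h
      _ = M₂ * (κ - y) := by rw [abs_sub_comm, abs_of_nonneg (by linarith [hy.2])]
  -- Taylor: |f x - f' κ * (x - κ)| ≤ M₂ (κ-x)^2 on Icc
  have taylor : ∀ x ∈ Set.Icc (0:ℝ) κ, |f x - f' κ * (x - κ)| ≤ M₂ * (κ - x)^2 := by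
    intro x hx
    have hsub : Set.Icc x κ ⊆ Set.Icc 0 κ := Set.Icc_subset_Icc hx.1 le_rfl
    have h := Convex.norm_image_sub_le_of_norm_hasDerivWithin_le
      (f := fun y => f y - f' κ * y) (f' := fun y => f' y - f' κ) (C := M₂ * (κ - x))
      (s := Set.Icc x κ)
      (fun y hy => (((hd y (hκU (hsub hy))).sub
        (((hasDerivAt_id y).const_mul (f' κ)).congr_deriv (mul_one _)))).hasDerivWithinAt)
      (fun y hy => by
        rw [Real.norm_eq_abs]
        calc |f' y - f' κ| ≤ M₂ * (κ - y) := mvt2 y (hsub hy)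
          _ ≤ M₂ * (κ - x) := by
            have := hy.1
            exact mul_le_mul_of_nonneg_left (by linarith) (le_of_lt hM₂pos))
      (convex_Icc x κ)
      (Set.right_mem_Icc.2 hx.2) (Set.left_mem_Icc.2 hx.2)
    rw [Real.norm_eq_abs, Real.norm_eq_abs] at h
    have e1 : f x - f' κ * x - (f κ - f' κ * κ) = f x - f' κ * (x - κ) := by
      rw [hfκ]; ring
    rw [e1] at h
    calc |f x - f' κ * (x - κ)| ≤ M₂ * (κ - x) * |x - κ| := h
      _ = M₂ * (κ - x)^2 := by
          rw [abs_sub_comm, abs_of_nonneg (by linarith [hx.2])]; ring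
  -- lower bound  f x ≥ c₁ (κ - x)
  set A : ℝ := -f' κ with hAdef
  have hApos : 0 < A := by simp [hAdef]; linarith
  have hAeq : f' κ = -A := by rw [hAdef]; ring
  clear_value A
  set δ : ℝ := min κ (A/(2*M₂)) with hδdef
  have hδpos : 0 < δ := lt_min hκ (by positivity)
  have hδκ : δ ≤ κ := min_le_left _ _
  have hδ2 : δ ≤ A/(2*M₂) := min_le_right _ _
  clear_value δ
  have hnear : ∀ x ∈ Set.Icc (0:ℝ) κ, κ - x ≤ δ → (A/2) * (κ - x) ≤ f x := by
    intro x hx hxd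
    have ht := taylor x hx
    have h1 : f' κ * (x - κ) - M₂ * (κ-x)^2 ≤ f x := by
      have := abs_le.1 ht; linarith [this.1]
    have h2 : f' κ * (x - κ) = A * (κ - x) := by rw [hAeq]; ring
    have h3 : M₂ * (κ-x)^2 ≤ (A/2) * (κ - x) := by
      have hxk : 0 ≤ κ - x := by linarith [hx.2]
      have hd2 : κ - x ≤ A/(2*M₂) := le_trans hxd hδ2
      calc M₂ * (κ-x)^2 = (M₂ * (κ - x)) * (κ - x) := by ring
        _ ≤ (M₂ * (A/(2*M₂))) * (κ - x) := by
            apply mul_le_mul_of_nonneg_right _ hxk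
            exact mul_le_mul_of_nonneg_left hd2 (le_of_lt hM₂pos)
        _ = (A/2) * (κ - x) := by field_simp
    rw [h2] at h1; linarith
  obtain ⟨x₀, hx₀mem, hx₀min⟩ := hcpt.exists_isMinOn
      (Set.nonempty_Icc.2 (le_of_lt hκ)) ((hfc.mono hκU))
  have hm₀aux : ∀ x ∈ Set.Icc 0 (κ - δ), (0:ℝ) < f x := by
    intro x hx
    exact hfpos x ⟨hx.1, by linarith [hx.2]⟩
  obtain ⟨x₁, hx₁mem, hx₁min⟩ := (isCompact_Icc (a := (0:ℝ)) (b := κ - δ)).exists_isMinOn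
      (Set.nonempty_Icc.2 (by linarith)) ((hfc.mono hκU).mono
        (Set.Icc_subset_Icc le_rfl (by linarith)))
  set m₀ : ℝ := f x₁ with hm₀def
  have hm₀pos : 0 < m₀ := hm₀aux x₁ hx₁mem
  have hm₀le : ∀ x ∈ Set.Icc 0 (κ - δ), m₀ ≤ f x := fun x hx => hx₁min hx
  clear_value m₀
  set c₁ : ℝ := min (A/2) (m₀/κ) with hc₁def
  have hc₁pos : 0 < c₁ := lt_min (by positivity) (by positivity)
  have hc₁A : c₁ ≤ A/2 := min_le_left _ _
  have hc₁m : c₁ ≤ m₀/κ := min_le_right _ _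
  clear_value c₁
  have hlow : ∀ x ∈ Set.Icc (0:ℝ) κ, c₁ * (κ - x) ≤ f x := by
    intro x hx
    rcases le_or_gt (κ - x) δ with h | h
    · calc c₁ * (κ - x) ≤ (A/2) * (κ - x) :=
          mul_le_mul_of_nonneg_right hc₁A (by linarith [hx.2])
        _ ≤ f x := hnear x hx h
    · have hxm : x ∈ Set.Icc 0 (κ - δ) := ⟨hx.1, by linarith⟩
      calc c₁ * (κ - x) ≤ (m₀/κ) * (κ - x) :=
          mul_le_mul_of_nonneg_right hc₁m (by linarith [hx.2])
        _ ≤ (m₀/κ) * κ := by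
            apply mul_le_mul_of_nonneg_left (by linarith [hx.1]) (by positivity)
        _ = m₀ := by field_simp
        _ ≤ f x := hm₀le x hxm
  -- final bound
  have hf0 : 0 < f 0 := hfpos 0 ⟨le_rfl, hκ⟩
  set B₁ : ℝ := (M₁+1)/(c₁*(κ/2)*(f 0)) with hB₁
  set B₂ : ℝ := 2/(A*κ^2) with hB₂
  set B₃ : ℝ := (κ*M₂+A)*2/(c₁*A*κ^2) with hB₃
  set B₄ : ℝ := 2/(f 0 * κ) with hB₄
  have hB₁pos : 0 < B₁ := by positivity
  have hB₂pos : 0 < B₂ := by positivity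
  have hB₃pos : 0 < B₃ := by positivity
  have hB₄pos : 0 < B₄ := by positivity
  clear_value B₁ B₂ B₃ B₄
  refine ⟨B₁+B₂+B₃+B₄, by positivity, ?_⟩
  intro x hx
  obtain ⟨hx0, hxκ⟩ := hx
  have hxI : x ∈ Set.Icc (0:ℝ) κ := ⟨le_of_lt hx0, le_of_lt hxκ⟩
  have hfx : 0 < f x := hfpos x ⟨le_of_lt hx0, hxκ⟩
  have hkx : 0 < κ - x := by linarith
  have hRden : f' κ * κ * (x - κ) = A*κ*(κ-x) := by rw [hAeq]; ring
  have hRpos : 0 < A*κ*(κ-x) := by positivity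
  rw [hRden]
  rcases le_or_gt x (κ/2) with hcase | hcase
  · -- x ≤ κ/2
    have h1 : |1/(f x * x) - 1/(f 0 * x)| ≤ B₁ := by
      have heq : 1/(f x * x) - 1/(f 0 * x) = (f 0 - f x)/(f x * (f 0) * x) := by
        field_simp
      rw [heq, abs_div, abs_of_pos (by positivity : (0:ℝ) < f x * f 0 * x)]
      have hnum : |f 0 - f x| ≤ (M₁+1) * x := by
        rw [abs_sub_comm]; exact mvt1 x hxI
      have hden : c₁*(κ/2)*(f 0)*x ≤ f x * f 0 * x := by
        have h5 : c₁*(κ/2) ≤ f x := by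
          calc c₁*(κ/2) ≤ c₁*(κ-x) := by
                apply mul_le_mul_of_nonneg_left (by linarith) (le_of_lt hc₁pos)
            _ ≤ f x := hlow x hxI
        have : c₁*(κ/2)*(f 0) ≤ f x * f 0 := mul_le_mul_of_nonneg_right h5 (le_of_lt hf0)
        exact mul_le_mul_of_nonneg_right this (le_of_lt hx0)
      calc |f 0 - f x| / (f x * f 0 * x) ≤ ((M₁+1)*x) / (c₁*(κ/2)*(f 0)*x) :=
          div_le_div₀ (by positivity) hnum (by positivity) hden
        _ = B₁ := by rw [hB₁]; field_simp
    have h2 : |1/(A*κ*(κ-x))| ≤ B₂ := by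
      rw [abs_of_pos (by positivity)]
      rw [hB₂]
      rw [div_le_div_iff₀ hRpos (by positivity)]
      nlinarith [mul_pos hApos hkx]
    calc |1/(f x * x) - 1/(f 0 * x) - 1/(A*κ*(κ-x))|
        ≤ |1/(f x * x) - 1/(f 0 * x)| + |1/(A*κ*(κ-x))| := abs_sub _ _
      _ ≤ B₁ + B₂ := add_le_add h1 h2
      _ ≤ B₁+B₂+B₃+B₄ := by linarith
  · -- κ/2 < x
    have h3 : |1/(f x * x) - 1/(A*κ*(κ-x))| ≤ B₃ := by
      have heq : 1/(f x * x) - 1/(A*κ*(κ-x))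
          = (A*κ*(κ-x) - f x * x)/(f x * x * (A*κ*(κ-x))) := by
        field_simp
      rw [heq, abs_div, abs_of_pos (by positivity : (0:ℝ) < f x * x * (A*κ*(κ-x)))]
      have hnum : |A*κ*(κ-x) - f x * x| ≤ (κ*M₂+A)*(κ-x)^2 := by
        have e : A*κ*(κ-x) - f x * x
            = -(x*(f x - f' κ * (x - κ))) - f' κ*(x-κ)^2 := by
          rw [hAeq]; ring
        rw [e]
        have t1 : |x*(f x - f' κ * (x - κ))| ≤ κ * (M₂*(κ-x)^2) := by
          rw [abs_mul, abs_of_pos hx0]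
          exact mul_le_mul (le_of_lt hxκ) (taylor x hxI) (abs_nonneg _) (le_of_lt hκ)
        have t2 : |f' κ*(x-κ)^2| = A*(κ-x)^2 := by
          rw [abs_mul, abs_of_neg hF', abs_of_nonneg (sq_nonneg _), hAeq]; ring
        calc |-(x*(f x - f' κ * (x - κ))) - f' κ*(x-κ)^2|
            ≤ |-(x*(f x - f' κ * (x - κ)))| + |f' κ*(x-κ)^2| := abs_sub _ _
          _ = |x*(f x - f' κ * (x - κ))| + |f' κ*(x-κ)^2| := by rw [abs_neg]
          _ ≤ κ * (M₂*(κ-x)^2) + A*(κ-x)^2 := by rw [t2]; linarith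
          _ = (κ*M₂+A)*(κ-x)^2 := by ring
      have hden : (c₁*A*κ^2/2)*(κ-x)^2 ≤ f x * x * (A*κ*(κ-x)) := by
        have h5 : c₁*(κ-x) ≤ f x := hlow x hxI
        have h6 : (0:ℝ) ≤ x * (A*κ*(κ-x)) := by positivity
        have h7 : c₁*(κ-x) * (x * (A*κ*(κ-x))) ≤ f x * (x * (A*κ*(κ-x))) :=
          mul_le_mul_of_nonneg_right h5 h6
        have h9 := mul_le_mul_of_nonneg_left (le_of_lt hcase)
          (show (0:ℝ) ≤ c₁*A*κ*(κ-x)^2 by positivity)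
        have e1 : (c₁*A*κ^2/2)*(κ-x)^2 = c₁*A*κ*(κ-x)^2 * (κ/2) := by ring
        have e2 : c₁*(κ-x) * (x * (A*κ*(κ-x))) = c₁*A*κ*(κ-x)^2 * x := by ring
        have e3 : f x * (x * (A*κ*(κ-x))) = f x * x * (A*κ*(κ-x)) := by ring
        rw [e1]
        calc c₁*A*κ*(κ-x)^2 * (κ/2) ≤ c₁*A*κ*(κ-x)^2 * x := h9
          _ = c₁*(κ-x) * (x * (A*κ*(κ-x))) := by ring
          _ ≤ f x * (x * (A*κ*(κ-x))) := h7
          _ = f x * x * (A*κ*(κ-x)) := by ring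
      calc |A*κ*(κ-x) - f x * x| / (f x * x * (A*κ*(κ-x)))
          ≤ ((κ*M₂+A)*(κ-x)^2) / ((c₁*A*κ^2/2)*(κ-x)^2) :=
            div_le_div₀ (by positivity) hnum (by positivity) hden
        _ = B₃ := by rw [hB₃]; field_simp
    have h4 : |1/(f 0 * x)| ≤ B₄ := by
      rw [abs_of_pos (by positivity), hB₄, div_le_div_iff₀ (by positivity) (by positivity)]
      nlinarith [mul_pos hf0 hx0]
    calc |1/(f x * x) - 1/(f 0 * x) - 1/(A*κ*(κ-x))|
        = |(1/(f x * x) - 1/(A*κ*(κ-x))) - 1/(f 0 * x)| := by congr 1; ring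
      _ ≤ |1/(f x * x) - 1/(A*κ*(κ-x))| + |1/(f 0 * x)| := abs_sub _ _
      _ ≤ B₃ + B₄ := add_le_add h3 h4
      _ ≤ B₁+B₂+B₃+B₄ := by linarith


lemma reflect_sum (m : ℕ) (hm : 1 ≤ m) :
    ∑ i ∈ Finset.Ico 1 m, (1:ℝ)/((m:ℝ) - i) = ∑ j ∈ Finset.Ico 1 m, (1:ℝ)/j := by
  apply Finset.sum_bij' (fun (a : ℕ) _ => m - a) (fun (a : ℕ) _ => m - a)
  · intro a ha
    simp only [Finset.mem_Ico] at ha ⊢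
    omega
  · intro a ha
    simp only [Finset.mem_Ico] at ha ⊢
    omega
  · intro a ha
    simp only [Finset.mem_Ico] at ha
    omega
  · intro a ha
    simp only [Finset.mem_Ico] at ha
    omega
  · intro a ha
    simp only [Finset.mem_Ico] at ha
    congr 1
    rw [Nat.cast_sub (by omega)]

lemma reflect_sum2 (m : ℕ) (hm : 1 ≤ m) :
    ∑ i ∈ Finset.Ico 1 m, (1:ℝ)/(((m:ℝ)+1) - i)
      = (∑ j ∈ Finset.Ico 1 (m+1), (1:ℝ)/j) - 1 := by
  have h1 : ∑ j ∈ Finset.Ico 1 (m+1), (1:ℝ)/j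
      = 1 + ∑ j ∈ Finset.Ico 2 (m+1), (1:ℝ)/j := by
    rw [Finset.sum_eq_sum_Ico_succ_bot (by omega)]
    norm_num
  rw [h1]
  have h2 : ∑ i ∈ Finset.Ico 1 m, (1:ℝ)/(((m:ℝ)+1) - i)
      = ∑ j ∈ Finset.Ico 2 (m+1), (1:ℝ)/j := by
    apply Finset.sum_bij' (fun (a : ℕ) _ => m + 1 - a) (fun (a : ℕ) _ => m + 1 - a)
    · intro a ha; simp only [Finset.mem_Ico] at ha ⊢; omega
    · intro a ha; simp only [Finset.mem_Ico] at ha ⊢; omega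
    · intro a ha; simp only [Finset.mem_Ico] at ha; omega
    · intro a ha; simp only [Finset.mem_Ico] at ha; omega
    · intro a ha
      simp only [Finset.mem_Ico] at ha
      congr 1
      rw [Nat.cast_sub (by omega)]
      push_cast; ring
  rw [h2]; ring

lemma Tbounds (m : ℕ) (hm : 1 ≤ m) (r : ℝ) (h1 : (m:ℝ) ≤ r) (h2 : r < (m:ℝ)+1) :
    ((∑ j ∈ Finset.Ico 1 (m+1), (1:ℝ)/j) - 1 ≤ ∑ i ∈ Finset.Ico 1 m, 1/(r - (i:ℝ))) ∧
    (∑ i ∈ Finset.Ico 1 m, 1/(r - (i:ℝ)) ≤ ∑ j ∈ Finset.Ico 1 m, (1:ℝ)/j) := by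
  constructor
  · rw [← reflect_sum2 m hm]
    apply Finset.sum_le_sum
    intro i hi
    simp only [Finset.mem_Ico] at hi
    have hi1 : (1:ℝ) ≤ i := by exact_mod_cast hi.1
    have hi2 : (i:ℝ) ≤ (m:ℝ) - 1 := by
      have : (i:ℝ) + 1 ≤ m := by exact_mod_cast hi.2
      linarith
    apply one_div_le_one_div_of_le (by linarith) (by linarith)
  · rw [← reflect_sum m hm]
    apply Finset.sum_le_sum
    intro i hi
    simp only [Finset.mem_Ico] at hi
    have hi2 : (i:ℝ) ≤ (m:ℝ) - 1 := by
      have : (i:ℝ) + 1 ≤ m := by exact_mod_cast hi.2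
      linarith
    apply one_div_le_one_div_of_le (by linarith) (by linarith)

set_option maxHeartbeats 1000000 in
lemma main_aux (f f' f'' : ℝ → ℝ) (κ : ℝ) (hκ : 0 < κ) (U : Set ℝ) (hU : IsOpen U)
    (hκU : Set.Icc 0 κ ⊆ U)
    (hd : ∀ x ∈ U, HasDerivAt f (f' x) x)
    (hd2 : ∀ x ∈ U, HasDerivAt f' (f'' x) x)
    (h''c : ContinuousOn f'' U)
    (hfpos : ∀ x ∈ Set.Ico 0 κ, 0 < f x)
    (hfκ : f κ = 0)
    (hF' : f' κ < 0) :
    Tendsto (fun n : ℕ =>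
      (∑ i ∈ Finset.Ico 1 (⌊κ * (n : ℝ)⌋₊), 1 / (f ((i : ℝ) / n) * (i : ℝ))) /
      ((1 / f 0 - 1 / (f' κ * κ)) * Real.log n)) atTop (nhds 1) := by
  obtain ⟨M, hMpos, hM⟩ := hbound f f' f'' κ hκ U hU hκU hd hd2 h''c hfpos hfκ hF'
  have hf0 : 0 < f 0 := hfpos 0 ⟨le_rfl, hκ⟩
  set a : ℝ := 1 / f 0 with ha
  set b : ℝ := -(1/(f' κ * κ)) with hb
  have hapos : 0 < a := by positivity
  have hbpos : 0 < b := by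
    rw [hb]
    have : f' κ * κ < 0 := mul_neg_of_neg_of_pos hF' hκ
    simp only [neg_pos]
    exact one_div_neg.2 this
  set c : ℝ := |Real.log κ| + Real.log 2 with hc
  have hcpos : 0 ≤ c := by
    have := Real.log_nonneg (by norm_num : (1:ℝ) ≤ 2)
    have := abs_nonneg (Real.log κ)
    linarith
  set K : ℝ := a*(1+c) + b*(1+c) + κ*M with hK
  set S : ℕ → ℝ := fun n => ∑ i ∈ Finset.Ico 1 (⌊κ * (n : ℝ)⌋₊),
      1 / (f ((i : ℝ) / n) * (i : ℝ)) with hS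
  set D : ℝ := 1 / f 0 - 1 / (f' κ * κ) with hD
  have hDab : D = a + b := by rw [hD, ha, hb]; ring
  have hDpos : 0 < D := by rw [hDab]; linarith
  -- key eventual bound
  have key : ∀ᶠ n : ℕ in atTop, |S n - D * Real.log n| ≤ K := by
    have hev1 : ∀ᶠ n : ℕ in atTop, (2:ℝ) ≤ κ * n := by
      have h : Tendsto (fun n : ℕ => κ * (n:ℝ)) atTop atTop :=
        (tendsto_natCast_atTop_atTop (R := ℝ)).const_mul_atTop hκ
      exact h.eventually_ge_atTop 2
    filter_upwards [hev1, eventually_ge_atTop 1] with n hn2 hn1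
    have hnR : (0:ℝ) < n := by exact_mod_cast hn1
    set m : ℕ := ⌊κ * (n:ℝ)⌋₊ with hm
    have hmle : (m:ℝ) ≤ κ*n := Nat.floor_le (by positivity)
    have hmgt : κ*(n:ℝ) < m+1 := Nat.lt_floor_add_one _
    have hm2 : 2 ≤ m := Nat.le_floor (by exact_mod_cast hn2)
    have hm1 : 1 ≤ m := by omega
    have hmRpos : (0:ℝ) < m := by exact_mod_cast (by omega : 0 < m)
    -- pointwise decomposition
    have hpt : ∀ i ∈ Finset.Ico 1 m,
        1 / (f ((i:ℝ)/n) * (i:ℝ))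
          = 1/(f 0 * i) + 1/(f' κ * κ * ((i:ℝ) - κ*n))
            + (1/(f ((i:ℝ)/n) * ((i:ℝ)/n)) - 1/(f 0 * ((i:ℝ)/n))
                - 1/(f' κ * κ * (((i:ℝ)/n) - κ)))/n := by
      intro i hi
      simp only [Finset.mem_Ico] at hi
      have hi1 : (1:ℝ) ≤ i := by exact_mod_cast hi.1
      have him : (i:ℝ) ≤ (m:ℝ) - 1 := by
        have : (i:ℝ) + 1 ≤ m := by exact_mod_cast hi.2
        linarith
      set x : ℝ := (i:ℝ)/n with hx
      have hxn : x * n = i := div_mul_cancel₀ _ (ne_of_gt hnR)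
      have hx0 : 0 < x := by rw [hx]; positivity
      have hxκ : x < κ := by
        rw [hx, div_lt_iff₀ hnR]
        calc (i:ℝ) ≤ (m:ℝ) - 1 := him
          _ ≤ κ*n - 1 := by linarith
          _ < κ*n := by linarith
      have hfx : 0 < f x := hfpos x ⟨le_of_lt hx0, hxκ⟩
      have e1 : f x * x * n = f x * i := by rw [mul_assoc, hxn]
      have e2 : f 0 * x * n = f 0 * i := by rw [mul_assoc, hxn]
      have e3 : f' κ * κ * (x - κ) * n = f' κ * κ * ((i:ℝ) - κ*n) := by
        rw [mul_assoc, sub_mul, hxn]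
      rw [sub_div, sub_div, div_div, div_div, div_div, e1, e2, e3]
      ring
    have hsplit : S n = (∑ i ∈ Finset.Ico 1 m, 1/(f 0 * i))
        + (∑ i ∈ Finset.Ico 1 m, 1/(f' κ * κ * ((i:ℝ) - κ*n)))
        + (∑ i ∈ Finset.Ico 1 m, (1/(f ((i:ℝ)/n) * ((i:ℝ)/n)) - 1/(f 0 * ((i:ℝ)/n))
                - 1/(f' κ * κ * (((i:ℝ)/n) - κ)))/n) := by
      rw [hS]
      simp only
      rw [← hm, Finset.sum_congr rfl hpt, Finset.sum_add_distrib, Finset.sum_add_distrib]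
    -- first sum = a * Hm
    set Hm : ℝ := ∑ j ∈ Finset.Ico 1 m, (1:ℝ)/j with hHm
    have hA : (∑ i ∈ Finset.Ico 1 m, 1/(f 0 * i)) = a * Hm := by
      rw [hHm, Finset.mul_sum]
      exact Finset.sum_congr rfl fun i _ => (one_div_mul_one_div _ _).symm
    -- second sum = b * T
    set T : ℝ := ∑ i ∈ Finset.Ico 1 m, 1/(κ*(n:ℝ) - i) with hT
    have hB : (∑ i ∈ Finset.Ico 1 m, 1/(f' κ * κ * ((i:ℝ) - κ*n))) = b * T := by
      rw [hT, Finset.mul_sum]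
      refine Finset.sum_congr rfl fun i _ => ?_
      rw [show f' κ * κ * ((i:ℝ) - κ*n) = -(f' κ * κ * (κ*n - i)) by ring, div_neg,
        hb, neg_mul, one_div_mul_one_div]
    -- error term bound
    have hE : |∑ i ∈ Finset.Ico 1 m, (1/(f ((i:ℝ)/n) * ((i:ℝ)/n)) - 1/(f 0 * ((i:ℝ)/n))
                - 1/(f' κ * κ * (((i:ℝ)/n) - κ)))/n| ≤ κ*M := by
      calc |∑ i ∈ Finset.Ico 1 m, (1/(f ((i:ℝ)/n) * ((i:ℝ)/n)) - 1/(f 0 * ((i:ℝ)/n))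
                - 1/(f' κ * κ * (((i:ℝ)/n) - κ)))/n|
          ≤ ∑ i ∈ Finset.Ico 1 m, |(1/(f ((i:ℝ)/n) * ((i:ℝ)/n)) - 1/(f 0 * ((i:ℝ)/n))
                - 1/(f' κ * κ * (((i:ℝ)/n) - κ)))/n| := Finset.abs_sum_le_sum_abs _ _
        _ ≤ ∑ i ∈ Finset.Ico 1 m, M/n := by
            apply Finset.sum_le_sum
            intro i hi
            simp only [Finset.mem_Ico] at hi
            have hi1 : (1:ℝ) ≤ i := by exact_mod_cast hi.1
            have him : (i:ℝ) ≤ (m:ℝ) - 1 := by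
              have : (i:ℝ) + 1 ≤ m := by exact_mod_cast hi.2
              linarith
            have hx0 : 0 < (i:ℝ)/n := by positivity
            have hxκ : (i:ℝ)/n < κ := by
              rw [div_lt_iff₀ hnR]
              calc (i:ℝ) ≤ (m:ℝ) - 1 := him
                _ < κ*n := by linarith
            rw [abs_div, abs_of_pos hnR]
            gcongr
            exact hM _ ⟨hx0, hxκ⟩
        _ = (Finset.Ico 1 m).card * (M/n) := by rw [Finset.sum_const, nsmul_eq_mul]
        _ = ((m - 1 : ℕ):ℝ) * (M/n) := by rw [Nat.card_Ico]
        _ ≤ (κ*n) * (M/n) := by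
            apply mul_le_mul_of_nonneg_right _ (by positivity)
            calc ((m - 1 : ℕ):ℝ) ≤ (m:ℝ) := by
                  have : (m - 1 : ℕ) ≤ m := by omega
                  exact_mod_cast this
              _ ≤ κ*n := hmle
        _ = κ*M := by field_simp
    -- harmonic estimates
    have hHm1 : |Hm - Real.log m| ≤ 1 := by
      rw [abs_le]
      constructor
      · have := harm_lower m hm1; rw [← hHm] at this; linarith
      · have := harm_upper m; rw [← hHm] at this; linarith
    have hTm : |T - Real.log m| ≤ 1 := by
      obtain ⟨hTlo, hThi⟩ := Tbounds m hm1 (κ*n) hmle hmgt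
      rw [← hT] at hTlo hThi
      rw [← hHm] at hThi
      have h1 := harm_lower (m+1) (by omega)
      have h2 := harm_upper m
      rw [← hHm] at h2
      have h3 : Real.log m ≤ Real.log (m+1:ℕ) :=
        Real.log_le_log hmRpos (by push_cast; linarith)
      push_cast at h1 h3
      rw [abs_le]
      constructor <;> linarith
    -- log comparison
    have hlogmn : |Real.log m - Real.log n| ≤ c := by
      have hup : Real.log m ≤ Real.log κ + Real.log n := by
        calc Real.log m ≤ Real.log (κ*n) := Real.log_le_log hmRpos hmle
          _ = Real.log κ + Real.log n := Real.log_mul (ne_of_gt hκ) (ne_of_gt hnR)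
      have hlo : Real.log κ + Real.log n - Real.log 2 ≤ Real.log m := by
        have h4 : κ*n/2 ≤ m := by linarith
        calc Real.log κ + Real.log n - Real.log 2
            = Real.log (κ*n/2) := by
              rw [Real.log_div (by positivity) (by norm_num),
                Real.log_mul (ne_of_gt hκ) (ne_of_gt hnR)]
          _ ≤ Real.log m := Real.log_le_log (by positivity) h4
      rw [hc, abs_le]
      constructor
      · have := neg_abs_le (Real.log κ)
        have h2 := Real.log_nonneg (by norm_num : (1:ℝ) ≤ 2)
        linarith
      · have := le_abs_self (Real.log κ)
        have h2 := Real.log_nonneg (by norm_num : (1:ℝ) ≤ 2)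
        linarith
    -- combine
    have hHn : |Hm - Real.log n| ≤ 1 + c := by
      calc |Hm - Real.log n| = |(Hm - Real.log m) + (Real.log m - Real.log n)| := by ring_nf
        _ ≤ |Hm - Real.log m| + |Real.log m - Real.log n| := abs_add_le _ _
        _ ≤ 1 + c := add_le_add hHm1 hlogmn
    have hTn : |T - Real.log n| ≤ 1 + c := by
      calc |T - Real.log n| = |(T - Real.log m) + (Real.log m - Real.log n)| := by ring_nf
        _ ≤ |T - Real.log m| + |Real.log m - Real.log n| := abs_add_le _ _
        _ ≤ 1 + c := add_le_add hTm hlogmn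
    have hdecomp : S n - D * Real.log n
        = a*(Hm - Real.log n) + b*(T - Real.log n)
          + (∑ i ∈ Finset.Ico 1 m, (1/(f ((i:ℝ)/n) * ((i:ℝ)/n)) - 1/(f 0 * ((i:ℝ)/n))
                - 1/(f' κ * κ * (((i:ℝ)/n) - κ)))/n) := by
      rw [hsplit, hA, hB, hDab]; ring
    rw [hdecomp, hK]
    calc |a*(Hm - Real.log n) + b*(T - Real.log n) + _|
        ≤ |a*(Hm - Real.log n) + b*(T - Real.log n)| + |_| := abs_add_le _ _
      _ ≤ |a*(Hm - Real.log n)| + |b*(T - Real.log n)| + κ*M := by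
          have := abs_add_le (a*(Hm - Real.log n)) (b*(T - Real.log n))
          linarith [hE]
      _ ≤ a*(1+c) + b*(1+c) + κ*M := by
          rw [abs_mul, abs_mul, abs_of_pos hapos, abs_of_pos hbpos]
          have h5 := mul_le_mul_of_nonneg_left hHn (le_of_lt hapos)
          have h6 := mul_le_mul_of_nonneg_left hTn (le_of_lt hbpos)
          linarith
  -- conclude
  have hlogn : Tendsto (fun n : ℕ => D * Real.log n) atTop atTop :=
    (Real.tendsto_log_atTop.comp (tendsto_natCast_atTop_atTop (R := ℝ))).const_mul_atTop hDpos
  have h0 : Tendsto (fun n : ℕ => (S n - D*Real.log n)/(D*Real.log n)) atTop (nhds 0) := by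
    apply squeeze_zero_norm' (a := fun n : ℕ => K/(D*Real.log n))
    · have hev2 : ∀ᶠ n : ℕ in atTop, 0 < D * Real.log n := hlogn.eventually_gt_atTop 0
      filter_upwards [key, hev2] with n hk hpos
      rw [Real.norm_eq_abs, abs_div, abs_of_pos hpos]
      gcongr
    · exact tendsto_const_nhds.div_atTop hlogn
  have h1 : Tendsto (fun n : ℕ => 1 + (S n - D*Real.log n)/(D*Real.log n)) atTop (nhds 1) := by
    simpa using h0.const_add (1:ℝ)
  apply h1.congr'
  have hev2 : ∀ᶠ n : ℕ in atTop, 0 < D * Real.log n := hlogn.eventually_gt_atTop 0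
  filter_upwards [hev2] with n hpos
  have hne : D * Real.log n ≠ 0 := ne_of_gt hpos
  rw [sub_div, div_self hne]; simp only [hS]; ring

/-- Logarithmic asymptotics of the (conditional) time to reach carrying capacity
(Proposition 8): under the standing assumptions, with `λ, μ` twice continuously
differentiable on a neighbourhood of `[0, κ]` and `λ'(κ) − μ'(κ) < 0`,
`∑_{i=1}^{⌊κn⌋−1} 1/((λ(i/n) − μ(i/n))·i)
  ∼ (1/(λ(0) − μ(0)) − 1/((λ'(κ) − μ'(κ))·κ))·log n`. -/
theorem time_to_carrying_capacity_log_asymptotics (lam mu : ℝ → ℝ)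
    (hlamc : ContinuousOn lam (Set.Ici 0)) (hmuc : ContinuousOn mu (Set.Ici 0))
    (hlamnn : ∀ x ∈ Set.Ici (0 : ℝ), 0 ≤ lam x) (hmunn : ∀ x ∈ Set.Ici (0 : ℝ), 0 ≤ mu x)
    (hanti : StrictAntiOn lam (Set.Ici 0)) (hmono : StrictMonoOn mu (Set.Ici 0))
    (hmu0 : 0 < mu 0) (hlm0 : mu 0 < lam 0)
    (κ : ℝ) (hκ : 0 < κ) (hκeq : lam κ = mu κ)
    (U : Set ℝ) (hU : IsOpen U) (hκU : Set.Icc 0 κ ⊆ U)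
    (lam' lam'' mu' mu'' : ℝ → ℝ)
    (hlamd : ∀ x ∈ U, HasDerivAt lam (lam' x) x)
    (hlamd2 : ∀ x ∈ U, HasDerivAt lam' (lam'' x) x)
    (hlam''c : ContinuousOn lam'' U)
    (hmud : ∀ x ∈ U, HasDerivAt mu (mu' x) x)
    (hmud2 : ∀ x ∈ U, HasDerivAt mu' (mu'' x) x)
    (hmu''c : ContinuousOn mu'' U)
    (hslope : lam' κ - mu' κ < 0) :
    Tendsto (fun n : ℕ =>
      (∑ i ∈ Finset.Ico 1 (⌊κ * (n : ℝ)⌋₊),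
          1 / ((lam ((i : ℝ) / n) - mu ((i : ℝ) / n)) * (i : ℝ))) /
      ((1 / (lam 0 - mu 0) - 1 / ((lam' κ - mu' κ) * κ)) * Real.log n))
      atTop (nhds 1) := by
  have hfpos : ∀ x ∈ Set.Ico (0:ℝ) κ, 0 < lam x - mu x := by
    intro x hx
    have hκI : κ ∈ Set.Ici (0:ℝ) := le_of_lt hκ
    have h1 : lam κ < lam x := hanti hx.1 hκI hx.2
    have h2 : mu x < mu κ := hmono hx.1 hκI hx.2
    linarith [hκeq]
  exact main_aux (fun x => lam x - mu x) (fun x => lam' x - mu' x)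
    (fun x => lam'' x - mu'' x) κ hκ U hU hκU
    (fun x hx => (hlamd x hx).sub (hmud x hx))
    (fun x hx => (hlamd2 x hx).sub (hmud2 x hx))
    (hlam''c.sub hmu''c) hfpos (sub_eq_zero.2 hκeq) hslope
end
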